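/- arXiv:math/0508091 — 5 statements merged into one kernel-verified Lean document; each statement's English description precedes it below -/
import Mathlib

section
/- Let A be a locally C*-algebra with S(A) its set of continuous C*-seminorms, directed by pointwise order. The canonical map from A to the inverse limit of the C*-algebras A_p = A/ker p (with connecting maps π_{pq} : A_p → A_q for p ≥ q induced by the identity) is an isomorphism of topological *-algebras. -/
noncomputable section

open Filter Topology Set
open scoped InnerProductSpace

universe u v w

/-- A continuous C*-seminorm on a topological `*`-algebra over `ℂ`. -/
structure CStarSeminorm (A : Type*) [Ring A] [StarRing A] [Algebra ℂ A]
    [TopologicalSpace A] where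
  toFun : A → ℝ
  nonneg' : ∀ a, 0 ≤ toFun a
  add_le' : ∀ a b, toFun (a + b) ≤ toFun a + toFun b
  smul' : ∀ (c : ℂ) (a : A), toFun (c • a) = ‖c‖ * toFun a
  mul_le' : ∀ a b, toFun (a * b) ≤ toFun a * toFun b
  star_mul_self' : ∀ a, toFun (star a * a) = toFun a ^ 2
  continuous' : Continuous toFun

instance {A : Type*} [Ring A] [StarRing A] [Algebra ℂ A] [TopologicalSpace A] :
    FunLike (CStarSeminorm A) A ℝ where
  coe := CStarSeminorm.toFun
  coe_injective := by rintro ⟨⟩ ⟨⟩ h; congr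

/-- `A` is a locally C*-algebra: it is a (complete, Hausdorff, topological) `*`-algebra
whose topology is determined by its continuous C*-seminorms: a filter tends to `0`
iff its image under every continuous C*-seminorm tends to `0`. -/
def IsLocallyCStarAlgebra (A : Type*) [Ring A] [StarRing A] [Algebra ℂ A]
    [TopologicalSpace A] : Prop :=
  ∀ l : Filter A, Tendsto id l (nhds 0) ↔
    ∀ p : CStarSeminorm A, Tendsto (fun a => p a) l (nhds (0 : ℝ))

/-- A Hilbert module over a locally C*-algebra `A`: a right `A`-module with an
`A`-valued inner product, complete for the topology determined by the seminorms
`ξ ↦ √(p ⟨ξ,ξ⟩)`, `p` a continuous C*-seminorm on `A`. -/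
structure HilbertModule (A : Type u) [Ring A] [StarRing A] [Algebra ℂ A] [UniformSpace A]
    (E : Type v) [AddCommGroup E] [Module ℂ E] [UniformSpace E] where
  smul : E → A → E
  smul_add : ∀ ξ a b, smul ξ (a + b) = smul ξ a + smul ξ b
  add_smul : ∀ ξ η a, smul (ξ + η) a = smul ξ a + smul η a
  smul_smul : ∀ ξ a b, smul (smul ξ a) b = smul ξ (a * b)
  smul_commC : ∀ (c : ℂ) ξ a, smul (c • ξ) a = c • smul ξ a
  smul_algebra : ∀ (c : ℂ) ξ a, smul ξ (c • a) = c • smul ξ a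
  inner : E → E → A
  inner_add_right : ∀ ξ η ζ, inner ξ (η + ζ) = inner ξ η + inner ξ ζ
  inner_smulC : ∀ (c : ℂ) ξ η, inner ξ (c • η) = c • inner ξ η
  inner_smul_right : ∀ ξ η a, inner ξ (smul η a) = inner ξ η * a
  star_inner : ∀ ξ η, star (inner ξ η) = inner η ξ
  inner_self_pos : ∀ ξ, ∃ a, inner ξ ξ = star a * a
  inner_self_eq_zero : ∀ ξ, inner ξ ξ = 0 → ξ = 0
  topology_eq : ∀ l : Filter E, Tendsto id l (nhds 0) ↔
      ∀ p : CStarSeminorm A, Tendsto (fun ξ => Real.sqrt (p (inner ξ ξ))) l (nhds (0 : ℝ))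
  complete : CompleteSpace E

/-- A Hilbert C*-module over a C*-algebra `B` (normed version). -/
structure HilbertCStarModule (B : Type u) [NormedRing B] [StarRing B] [CStarRing B]
    [NormedAlgebra ℂ B] [StarModule ℂ B] [CompleteSpace B]
    (E : Type v) [NormedAddCommGroup E] [NormedSpace ℂ E] where
  smul : E → B → E
  smul_add : ∀ ξ a b, smul ξ (a + b) = smul ξ a + smul ξ b
  add_smul : ∀ ξ η a, smul (ξ + η) a = smul ξ a + smul η a
  smul_smul : ∀ ξ a b, smul (smul ξ a) b = smul ξ (a * b)
  smul_commC : ∀ (c : ℂ) ξ a, smul (c • ξ) a = c • smul ξ a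
  smul_algebra : ∀ (c : ℂ) ξ a, smul ξ (c • a) = c • smul ξ a
  inner : E → E → B
  inner_add_right : ∀ ξ η ζ, inner ξ (η + ζ) = inner ξ η + inner ξ ζ
  inner_smulC : ∀ (c : ℂ) ξ η, inner ξ (c • η) = c • inner ξ η
  inner_smul_right : ∀ ξ η a, inner ξ (smul η a) = inner ξ η * a
  star_inner : ∀ ξ η, star (inner ξ η) = inner η ξ
  inner_self_pos : ∀ ξ, ∃ a, inner ξ ξ = star a * a
  inner_self_eq_zero : ∀ ξ, inner ξ ξ = 0 → ξ = 0
  norm_eq : ∀ ξ, ‖ξ‖ = Real.sqrt ‖inner ξ ξ‖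
  complete : CompleteSpace E

/-- A representation of a topological `*`-algebra `A` on a Hilbert space `H`:
a continuous `*`-homomorphism into the bounded operators. -/
structure RepOn (A : Type u) [Ring A] [StarRing A] [Algebra ℂ A] [TopologicalSpace A]
    (H : Type v) [NormedAddCommGroup H] [InnerProductSpace ℂ H] [CompleteSpace H] where
  toFun : A → H →L[ℂ] H
  map_add : ∀ a b, toFun (a + b) = toFun a + toFun b
  map_mul : ∀ a b, toFun (a * b) = (toFun a).comp (toFun b)
  map_smulC : ∀ (c : ℂ) a, toFun (c • a) = c • toFun a
  map_star : ∀ a, toFun (star a) = ContinuousLinearMap.adjoint (toFun a)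
  continuous : Continuous toFun

/-- A representation is non-degenerate if `φ(A)H` spans a dense subspace. -/
def RepOn.Nondegenerate {A : Type u} [Ring A] [StarRing A] [Algebra ℂ A] [TopologicalSpace A]
    {H : Type v} [NormedAddCommGroup H] [InnerProductSpace ℂ H] [CompleteSpace H]
    (φ : RepOn A H) : Prop :=
  Dense (↑(Submodule.span ℂ {h : H | ∃ a x, h = φ.toFun a x}) : Set H)

/-- Unitary equivalence of two representations. -/
def UnitarilyEquiv {A : Type u} [Ring A] [StarRing A] [Algebra ℂ A] [TopologicalSpace A]
    {H₁ : Type v} [NormedAddCommGroup H₁] [InnerProductSpace ℂ H₁] [CompleteSpace H₁]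
    {H₂ : Type w} [NormedAddCommGroup H₂] [InnerProductSpace ℂ H₂] [CompleteSpace H₂]
    (φ₁ : RepOn A H₁) (φ₂ : RepOn A H₂) : Prop :=
  ∃ U : H₁ ≃ₗᵢ[ℂ] H₂, ∀ a h, U (φ₁.toFun a h) = φ₂.toFun a (U h)

/-- The data of the induced Hilbert space `E ⊗_φ H`: a Hilbert space `K` together with
a map `ι : E × H → K` whose image spans a dense subspace and such that
`⟪ι ξ h₁, ι η h₂⟫ = ⟪h₁, φ(⟨ξ,η⟩) h₂⟫`. -/
structure InducedSpace {B : Type u} {E : Type v}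
    {H : Type w} [NormedAddCommGroup H] [InnerProductSpace ℂ H] [CompleteSpace H]
    (innerE : E → E → B) (φ : B → H →L[ℂ] H)
    (K : Type*) [NormedAddCommGroup K] [InnerProductSpace ℂ K] [CompleteSpace K] where
  ι : E → H → K
  inner_eq : ∀ ξ η h₁ h₂, ⟪ι ξ h₁, ι η h₂⟫_ℂ = ⟪h₁, φ (innerE ξ η) h₂⟫_ℂ
  dense : Dense (↑(Submodule.span ℂ {k : K | ∃ ξ h, k = ι ξ h}) : Set K)

/-- `S` is the adjoint of `T` relative to the `B`-valued inner product `innerE`. -/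
def Adjointable {B : Type u} {E : Type v} (innerE : E → E → B) (T S : E → E) : Prop :=
  ∀ ξ η, innerE (T ξ) η = innerE ξ (S η)

/-- `p̃(T) ≤ C` for the operator seminorm `p̃` associated to a C*-seminorm `p`. -/
def OpSeminormLE {A : Type u} {E : Type v} (innerE : E → E → A) (p : A → ℝ)
    (T : E → E) (C : ℝ) : Prop :=
  ∀ ξ, p (innerE (T ξ) (T ξ)) ≤ C ^ 2 * p (innerE ξ ξ)

/-- A non-degenerate continuous action of a locally C*-algebra `A` on a Hilbert
module `E` over a locally C*-algebra `B`, i.e. a non-degenerate continuous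
`*`-morphism `A → L_B(E)`. -/
structure ModuleAction (A : Type u) [Ring A] [StarRing A] [Algebra ℂ A] [UniformSpace A]
    {B : Type v} [Ring B] [StarRing B] [Algebra ℂ B] [UniformSpace B]
    {E : Type w} [AddCommGroup E] [Module ℂ E] [UniformSpace E]
    (M : HilbertModule B E) where
  Φ : A → E → E
  map_add : ∀ a b ξ, Φ (a + b) ξ = Φ a ξ + Φ b ξ
  map_addE : ∀ a ξ η, Φ a (ξ + η) = Φ a ξ + Φ a η
  map_mul : ∀ a b ξ, Φ (a * b) ξ = Φ a (Φ b ξ)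
  map_smulC : ∀ (c : ℂ) a ξ, Φ (c • a) ξ = c • Φ a ξ
  map_smulE : ∀ (c : ℂ) a ξ, Φ a (c • ξ) = c • Φ a ξ
  map_smulB : ∀ a ξ b, Φ a (M.smul ξ b) = M.smul (Φ a ξ) b
  adjoint : ∀ a, Adjointable M.inner (Φ a) (Φ (star a))
  continuous : ∀ q : CStarSeminorm B, ∃ p : CStarSeminorm A,
      ∀ a, OpSeminormLE M.inner (fun x => q x) (Φ a) (p a)
  nondeg : Dense (↑(Submodule.span ℂ {ξ : E | ∃ a η, ξ = Φ a η}) : Set E)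

/-- `ψ` is the representation induced (via the induced space data `ind`) from the
action `Φ` of `A` on the module. -/
def IsInducedRep {A : Type u} [Ring A] [StarRing A] [Algebra ℂ A] [TopologicalSpace A]
    {B : Type*} {E : Type*}
    {H : Type*} [NormedAddCommGroup H] [InnerProductSpace ℂ H] [CompleteSpace H]
    {K : Type*} [NormedAddCommGroup K] [InnerProductSpace ℂ K] [CompleteSpace K]
    {innerE : E → E → B} {φ : B → H →L[ℂ] H}
    (Φ : A → E → E) (ind : InducedSpace innerE φ K) (ψ : RepOn A K) : Prop :=
  ∀ a ξ h, ψ.toFun a (ind.ι ξ h) = ind.ι (Φ a ξ) h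

/-- The data of the quotient C*-algebra `A_p = A / ker p` of a locally C*-algebra by a
continuous C*-seminorm `p`: a C*-algebra together with a surjective `*`-homomorphism
whose norm is induced by `p`. -/
structure CStarQuotient (A : Type u) [Ring A] [StarRing A] [Algebra ℂ A] [TopologicalSpace A]
    (p : CStarSeminorm A)
    (Ap : Type v) [NormedRing Ap] [StarRing Ap] [CStarRing Ap] [NormedAlgebra ℂ Ap]
    [StarModule ℂ Ap] [CompleteSpace Ap] where
  π : A →⋆ₐ[ℂ] Ap
  surj : Function.Surjective π
  norm_eq : ∀ a, ‖π a‖ = p a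

/-- The data of the quotient Hilbert C*-module `E_p = E / {ξ | p⟨ξ,ξ⟩ = 0}` over
`A_p`, for a Hilbert module `E` over a locally C*-algebra `A`. -/
structure ModuleQuotient {A : Type u} [Ring A] [StarRing A] [Algebra ℂ A] [UniformSpace A]
    {E : Type v} [AddCommGroup E] [Module ℂ E] [UniformSpace E]
    (M : HilbertModule A E) (p : CStarSeminorm A)
    {Ap : Type w} [NormedRing Ap] [StarRing Ap] [CStarRing Ap] [NormedAlgebra ℂ Ap]
    [StarModule ℂ Ap] [CompleteSpace Ap] (Q : CStarQuotient A p Ap)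
    {Ep : Type*} [NormedAddCommGroup Ep] [NormedSpace ℂ Ep]
    (Mp : HilbertCStarModule Ap Ep) where
  σ : E →ₗ[ℂ] Ep
  surj : Function.Surjective σ
  inner_eq : ∀ ξ η, Mp.inner (σ ξ) (σ η) = Q.π (M.inner ξ η)
  smul_eq : ∀ ξ a, σ (M.smul ξ a) = Mp.smul (σ ξ) (Q.π a)

/-- The data of an isomorphism of the locally C*-algebra `B` onto `K_A(E)`, the
generalized compact operators of a full Hilbert `A`-module `E`; this witnesses
strong Morita equivalence of `A` and `B`. -/
structure MoritaData (A : Type u) [Ring A] [StarRing A] [Algebra ℂ A] [UniformSpace A]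
    (B : Type v) [Ring B] [StarRing B] [Algebra ℂ B] [UniformSpace B]
    (E : Type w) [AddCommGroup E] [Module ℂ E] [UniformSpace E]
    (M : HilbertModule A E) where
  Φ : B → E → E
  map_add : ∀ b c ξ, Φ (b + c) ξ = Φ b ξ + Φ c ξ
  map_mul : ∀ b c ξ, Φ (b * c) ξ = Φ b (Φ c ξ)
  map_smulC : ∀ (z : ℂ) b ξ, Φ (z • b) ξ = z • Φ b ξ
  adjoint : ∀ b, Adjointable M.inner (Φ b) (Φ (star b))
  inj : ∀ b, (∀ ξ, Φ b ξ = 0) → b = 0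
  cont : ∀ p : CStarSeminorm A, ∃ q : CStarSeminorm B,
      ∀ b, OpSeminormLE M.inner (fun x => p x) (Φ b) (q b)
  cont_inv : ∀ q : CStarSeminorm B, ∃ p : CStarSeminorm A,
      ∀ (b : B) (C : ℝ), 0 ≤ C → OpSeminormLE M.inner (fun x => p x) (Φ b) C → q b ≤ C
  theta_mem : ∀ ξ η, ∃ b, ∀ ζ, Φ b ζ = M.smul ξ (M.inner η ζ)
  dense_theta : Dense (↑(Submodule.span ℂ
      {b : B | ∃ ξ η, ∀ ζ, Φ b ζ = M.smul ξ (M.inner η ζ)}) : Set B)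
  full : Dense (↑(Submodule.span ℂ {a : A | ∃ ξ η, a = M.inner ξ η}) : Set A)

/-! The seminorms of a locally C*-algebra generate its topology and
`‖π_p a - π_p b‖ = p (a - b)`, so `A` carries the initial topology of the quotient maps
`π_p : A → A_p`, and the canonical map into the inverse limit is an embedding. For
surjectivity, lift a compatible family `x` to elements `g p ∈ A`; if `p ≤ r, s` then
`p (g s - g r) = ‖x p - x p‖ = 0`, so the net `g` on the directed set of seminorms is Cauchy,
and its limit maps to `x`. -/

namespace CStarSeminorm

variable {A : Type*} [Ring A] [StarRing A] [Algebra ℂ A] [TopologicalSpace A]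

instance : PartialOrder (CStarSeminorm A) :=
  PartialOrder.lift (fun p => (p : A → ℝ)) DFunLike.coe_injective

instance : SemilatticeSup (CStarSeminorm A) where
  sup p q :=
    { toFun := fun a => max (p a) (q a)
      nonneg' := fun a => le_max_of_le_left (p.nonneg' a)
      add_le' := fun a b =>
        max_le ((p.add_le' a b).trans (add_le_add (le_max_left _ _) (le_max_left _ _)))
          ((q.add_le' a b).trans (add_le_add (le_max_right _ _) (le_max_right _ _)))
      smul' := fun c a => by
        simp only [DFunLike.coe, p.smul', q.smul', mul_max_of_nonneg _ _ (norm_nonneg c)]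
      mul_le' := fun a b =>
        max_le ((p.mul_le' a b).trans (mul_le_mul (le_max_left _ _) (le_max_left _ _)
            (p.nonneg' b) (le_max_of_le_left (p.nonneg' a))))
          ((q.mul_le' a b).trans (mul_le_mul (le_max_right _ _) (le_max_right _ _)
            (q.nonneg' b) (le_max_of_le_left (p.nonneg' a))))
      star_mul_self' := fun a => by
        simp only [DFunLike.coe, p.star_mul_self', q.star_mul_self']
        rcases le_total (p.toFun a) (q.toFun a) with h | h
        · rw [max_eq_right h, max_eq_right (pow_le_pow_left₀ (p.nonneg' a) h 2)]
        · rw [max_eq_left h, max_eq_left (pow_le_pow_left₀ (q.nonneg' a) h 2)]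
      continuous' := p.continuous'.max q.continuous' }
  le_sup_left _ _ _ := le_max_left _ _
  le_sup_right _ _ _ := le_max_right _ _
  sup_le _ _ _ hp hq a := max_le (hp a) (hq a)

instance : Nonempty (CStarSeminorm A) :=
  ⟨{ toFun := fun _ => 0
     nonneg' := fun _ => le_rfl
     add_le' := fun _ _ => by norm_num
     smul' := fun _ _ => (mul_zero _).symm
     mul_le' := fun _ _ => by norm_num
     star_mul_self' := fun _ => by norm_num
     continuous' := continuous_const }⟩

end CStarSeminorm

namespace CStarQuotient

variable {A : Type u} [Ring A] [StarRing A] [Algebra ℂ A] [TopologicalSpace A]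
  {p : CStarSeminorm A} {Ap : Type v} [NormedRing Ap] [StarRing Ap] [CStarRing Ap]
  [NormedAlgebra ℂ Ap] [StarModule ℂ Ap] [CompleteSpace Ap]

theorem norm_π_sub (Q : CStarQuotient A p Ap) (a b : A) : ‖Q.π a - Q.π b‖ = p (a - b) := by
  rw [← map_sub, Q.norm_eq]

theorem comap_π_nhds (Q : CStarQuotient A p Ap) (a : A) :
    comap Q.π (𝓝 (Q.π a)) = comap (fun x => p (x - a)) (𝓝 0) := by
  rw [← nhds_comap_dist, comap_comap]
  simp only [Function.comp_def, dist_eq_norm, Q.norm_π_sub]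

end CStarQuotient

namespace IsLocallyCStarAlgebra

section Topological

variable {A : Type u} [Ring A] [StarRing A] [Algebra ℂ A] [TopologicalSpace A]

theorem nhds_zero_eq (hA : IsLocallyCStarAlgebra A) :
    𝓝 (0 : A) = ⨅ p : CStarSeminorm A, comap p (𝓝 0) :=
  le_antisymm (le_iInf fun p => tendsto_iff_comap.1 ((hA _).1 tendsto_id p))
    (tendsto_id'.1 <| (hA _).2 fun p => tendsto_iff_comap.2 (iInf_le _ p))

variable [IsTopologicalAddGroup A]
  {Ap : CStarSeminorm A → Type v} [∀ p, NormedRing (Ap p)] [∀ p, StarRing (Ap p)]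
  [∀ p, CStarRing (Ap p)] [∀ p, NormedAlgebra ℂ (Ap p)] [∀ p, StarModule ℂ (Ap p)]
  [∀ p, CompleteSpace (Ap p)] (Q : ∀ p, CStarQuotient A p (Ap p))

theorem nhds_eq_iInf_comap_π (hA : IsLocallyCStarAlgebra A) (a : A) :
    𝓝 a = ⨅ p, comap (Q p).π (𝓝 ((Q p).π a)) := by
  simp only [CStarQuotient.comap_π_nhds, ← nhds_translation_sub a, hA.nhds_zero_eq, comap_iInf,
    comap_comap, Function.comp_def]

theorem isInducing_pi_π (hA : IsLocallyCStarAlgebra A) : IsInducing fun a p => (Q p).π a := by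
  refine isInducing_iff_nhds.2 fun a => ?_
  rw [hA.nhds_eq_iInf_comap_π Q a, nhds_pi, Filter.pi, comap_iInf]
  simp only [comap_comap]
  rfl

end Topological

section Complete

variable {A : Type u} [Ring A] [StarRing A] [Algebra ℂ A] [UniformSpace A] [IsUniformAddGroup A]
  [CompleteSpace A]
  {Ap : CStarSeminorm A → Type v} [∀ p, NormedRing (Ap p)] [∀ p, StarRing (Ap p)]
  [∀ p, CStarRing (Ap p)] [∀ p, NormedAlgebra ℂ (Ap p)] [∀ p, StarModule ℂ (Ap p)]
  [∀ p, CompleteSpace (Ap p)] (Q : ∀ p, CStarQuotient A p (Ap p))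

theorem exists_π_eq_of_compatible (hA : IsLocallyCStarAlgebra A)
    (πpq : ∀ p q : CStarSeminorm A, (∀ a, q a ≤ p a) → (Ap p →⋆ₐ[ℂ] Ap q))
    (hπpq : ∀ (p q : CStarSeminorm A) (h : ∀ a, q a ≤ p a) (a : A),
      πpq p q h ((Q p).π a) = (Q q).π a)
    (x : ∀ p, Ap p) (hx : ∀ (p q : CStarSeminorm A) (h : ∀ a, q a ≤ p a), πpq p q h (x p) = x q) :
    ∃ a, ∀ p, (Q p).π a = x p := by
  choose g hg using fun p => (Q p).surj (x p)
  have π_g : ∀ p r, p ≤ r → (Q p).π (g r) = x p := fun p r h => by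
    rw [← hπpq r p h, hg, hx]
  have hg_cauchy : CauchySeq g := by
    rw [cauchySeq_iff_tendsto, uniformity_eq_comap_nhds_zero A, tendsto_comap_iff,
      hA.nhds_zero_eq, tendsto_iInf]
    intro p
    rw [tendsto_comap_iff]
    refine tendsto_const_nhds.congr' ?_
    filter_upwards [eventually_ge_atTop (p, p)] with rs hrs
    simp [← (Q p).norm_π_sub, π_g p _ hrs.1, π_g p _ hrs.2]
  obtain ⟨a, ha⟩ := cauchySeq_tendsto_of_complete hg_cauchy
  have π_continuousAt : ∀ p, Tendsto (Q p).π (𝓝 a) (𝓝 ((Q p).π a)) := fun p =>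
    tendsto_iff_comap.2 ((hA.nhds_eq_iInf_comap_π Q a).le.trans (iInf_le _ p))
  refine ⟨a, fun p => tendsto_nhds_unique ((π_continuousAt p).comp ha) ?_⟩
  exact tendsto_const_nhds.congr' ((eventually_ge_atTop p).mono fun r hr => (π_g p r hr).symm)

end Complete

end IsLocallyCStarAlgebra

theorem statement1_general (A : Type u) [Ring A] [StarRing A] [Algebra ℂ A] [UniformSpace A] [IsUniformAddGroup A]
    [CompleteSpace A] [T2Space A]
    (hA : IsLocallyCStarAlgebra A)
    (Ap : CStarSeminorm A → Type u)
    [∀ p, NormedRing (Ap p)] [∀ p, StarRing (Ap p)] [∀ p, CStarRing (Ap p)]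
    [∀ p, NormedAlgebra ℂ (Ap p)] [∀ p, StarModule ℂ (Ap p)] [∀ p, CompleteSpace (Ap p)]
    (Q : ∀ p, CStarQuotient A p (Ap p))
    (πpq : ∀ p q : CStarSeminorm A, (∀ a, q a ≤ p a) → (Ap p →⋆ₐ[ℂ] Ap q))
    (hπpq : ∀ (p q : CStarSeminorm A) (h : ∀ a, q a ≤ p a) (a : A),
      πpq p q h ((Q p).π a) = (Q q).π a) :
    ∃ e : A ≃ₜ {x : ∀ p, Ap p //
        ∀ (p q : CStarSeminorm A) (h : ∀ a, q a ≤ p a), πpq p q h (x p) = x q},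
      ∀ a p, (e a).1 p = (Q p).π a := by
  let f : A → {x : ∀ p, Ap p //
      ∀ (p q : CStarSeminorm A) (h : ∀ a, q a ≤ p a), πpq p q h (x p) = x q} :=
    fun a => ⟨fun p => (Q p).π a, fun p q h => hπpq p q h a⟩
  have hf : IsEmbedding f :=
    (IsInducing.subtypeVal.of_comp_iff.1 (hA.isInducing_pi_π Q)).isEmbedding
  have hf_surj : Function.Surjective f := fun x =>
    (hA.exists_π_eq_of_compatible Q πpq hπpq x.1 x.2).imp fun _ ha => Subtype.ext (funext ha)
  exact ⟨(Equiv.ofBijective f ⟨hf.injective, hf_surj⟩).toHomeomorphOfIsInducing hf.isInducing,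
    fun _ _ => rfl⟩

/-- The canonical map from a locally C*-algebra `A` to the inverse
limit of the quotient C*-algebras `A_p = A/ker p` (over all continuous C*-seminorms,
with the canonical connecting maps) is an isomorphism of topological `*`-algebras;
we exhibit it as a homeomorphism onto the inverse-limit subspace of the product which is
compatible with the quotient `*`-homomorphisms. -/
theorem statement1 (A : Type u) [Ring A] [StarRing A] [Algebra ℂ A] [UniformSpace A] [IsUniformAddGroup A]
    [IsTopologicalRing A] [ContinuousStar A] [ContinuousSMul ℂ A] [CompleteSpace A] [T2Space A]
    (hA : IsLocallyCStarAlgebra A)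
    (Ap : CStarSeminorm A → Type u)
    [∀ p, NormedRing (Ap p)] [∀ p, StarRing (Ap p)] [∀ p, CStarRing (Ap p)]
    [∀ p, NormedAlgebra ℂ (Ap p)] [∀ p, StarModule ℂ (Ap p)] [∀ p, CompleteSpace (Ap p)]
    (Q : ∀ p, CStarQuotient A p (Ap p))
    (πpq : ∀ p q : CStarSeminorm A, (∀ a, q a ≤ p a) → (Ap p →⋆ₐ[ℂ] Ap q))
    (hπpq : ∀ (p q : CStarSeminorm A) (h : ∀ a, q a ≤ p a) (a : A),
      πpq p q h ((Q p).π a) = (Q q).π a) :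
    ∃ e : A ≃ₜ {x : ∀ p, Ap p //
        ∀ (p q : CStarSeminorm A) (h : ∀ a, q a ≤ p a), πpq p q h (x p) = x q},
      ∀ a p, (e a).1 p = (Q p).π a :=
  statement1_general A hA Ap Q πpq hπpq
end
end

section
/- Let A and B be locally C*-algebras, E a Hilbert B-module on which A acts non-degenerately via Φ : A → L_B(E), and let (φ₁, H₁), (φ₂, H₂) be unitarily equivalent non-degenerate representations of B. Then the Rieffel-induced representations (_E^Aφ₁, _EH₁) and (_E^Aφ₂, _EH₂) of A are unitarily equivalent; explicitly, if U : H₁ → H₂ implements the equivalence, then ξ ⊗ h ↦ ξ ⊗ Uh extends to a unitary V : _EH₁ → _EH₂ intertwining _E^Aφ₁ and _E^Aφ₂. -/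
noncomputable section

open Filter Topology Set
open scoped InnerProductSpace

universe u v w

/-!
The elementary tensors `ξ ⊗ h` of `E ⊗_φ₁ H₁` and `ξ ⊗ U h` of `E ⊗_φ₂ H₂` have the same Gram
matrix, because `⟪h, φ₁(⟨ξ,η⟩) h'⟫ = ⟪U h, U φ₁(⟨ξ,η⟩) h'⟫ = ⟪U h, φ₂(⟨ξ,η⟩) U h'⟫`, and each
family spans a dense subspace. Hence `ξ ⊗ h ↦ ξ ⊗ U h` extends to a unitary, which intertwines
the induced representations since both act on elementary tensors by `ξ ⊗ h ↦ Φ(a) ξ ⊗ h`.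
-/

theorem Finsupp.denseRange_linearCombination {R ι K : Type*} [Semiring R] [AddCommMonoid K]
    [Module R K] [TopologicalSpace K] {u : ι → K}
    (hu : Dense (Submodule.span R (Set.range u) : Set K)) :
    DenseRange (linearCombination R u) := by
  rwa [DenseRange, ← LinearMap.coe_range, range_linearCombination]

section GramExtension

open Finsupp

variable {𝕜 ι K₁ K₂ : Type*} [RCLike 𝕜]
    [NormedAddCommGroup K₁] [InnerProductSpace 𝕜 K₁]
    [NormedAddCommGroup K₂] [InnerProductSpace 𝕜 K₂]

theorem inner_linearCombination_eq_of_inner_eq {s : ι → K₁} {t : ι → K₂}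
    (hst : ∀ i j, ⟪s i, s j⟫_𝕜 = ⟪t i, t j⟫_𝕜) (c d : ι →₀ 𝕜) :
    ⟪linearCombination 𝕜 s c, linearCombination 𝕜 s d⟫_𝕜 =
      ⟪linearCombination 𝕜 t c, linearCombination 𝕜 t d⟫_𝕜 := by
  simp only [linearCombination_apply, Finsupp.sum_inner, Finsupp.inner_sum, inner_smul_left,
    inner_smul_right, hst]

theorem norm_linearCombination_eq_of_inner_eq {s : ι → K₁} {t : ι → K₂}
    (hst : ∀ i j, ⟪s i, s j⟫_𝕜 = ⟪t i, t j⟫_𝕜) (c : ι →₀ 𝕜) :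
    ‖linearCombination 𝕜 t c‖ = ‖linearCombination 𝕜 s c‖ := by
  rw [@norm_eq_sqrt_re_inner 𝕜, @norm_eq_sqrt_re_inner 𝕜,
    inner_linearCombination_eq_of_inner_eq hst]

theorem exists_linearIsometryEquiv_of_inner_eq [CompleteSpace K₁] [CompleteSpace K₂]
    {s : ι → K₁} {t : ι → K₂} (hst : ∀ i j, ⟪s i, s j⟫_𝕜 = ⟪t i, t j⟫_𝕜)
    (hs : Dense (Submodule.span 𝕜 (Set.range s) : Set K₁))
    (ht : Dense (Submodule.span 𝕜 (Set.range t) : Set K₂)) :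
    ∃ V : K₁ ≃ₗᵢ[𝕜] K₂, ∀ i, V (s i) = t i := by
  have hs' := denseRange_linearCombination hs
  have ht' := denseRange_linearCombination ht
  -- extends `linearCombination 𝕜 s c ↦ linearCombination 𝕜 t c` from the dense range of the first
  refine ⟨(LinearEquiv.refl 𝕜 (ι →₀ 𝕜)).extendOfIsometry _ _ hs' ht'
    (norm_linearCombination_eq_of_inner_eq hst), fun i => ?_⟩
  simpa using (LinearEquiv.refl 𝕜 (ι →₀ 𝕜)).extendOfIsometry_eq _ _ hs' ht'
    (norm_linearCombination_eq_of_inner_eq hst) (single i 1)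

end GramExtension

theorem InducedSpace.dense_span_range_uncurry {B E H K : Type*}
    [NormedAddCommGroup H] [InnerProductSpace ℂ H] [CompleteSpace H]
    [NormedAddCommGroup K] [InnerProductSpace ℂ K] [CompleteSpace K]
    {innerE : E → E → B} {φ : B → H →L[ℂ] H} (ind : InducedSpace innerE φ K) :
    Dense (Submodule.span ℂ (Set.range (Function.uncurry ind.ι)) : Set K) := by
  convert ind.dense using 4
  ext k
  simp [eq_comm]

theorem statement6_general (A : Type u) [Ring A] [StarRing A] [Algebra ℂ A] [UniformSpace A]
    (B : Type u) [Ring B] [StarRing B] [Algebra ℂ B] [UniformSpace B]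
    (E : Type u) [AddCommGroup E] [Module ℂ E] [UniformSpace E] (M : HilbertModule B E) (act : ModuleAction A M)
    (H₁ : Type u) [NormedAddCommGroup H₁] [InnerProductSpace ℂ H₁] [CompleteSpace H₁]
    (H₂ : Type u) [NormedAddCommGroup H₂] [InnerProductSpace ℂ H₂] [CompleteSpace H₂]
    (φ₁ : RepOn B H₁)
    (φ₂ : RepOn B H₂)
    (U : H₁ ≃ₗᵢ[ℂ] H₂) (hU : ∀ b h, U (φ₁.toFun b h) = φ₂.toFun b (U h))
    (K₁ : Type u) [NormedAddCommGroup K₁] [InnerProductSpace ℂ K₁] [CompleteSpace K₁]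
    (K₂ : Type u) [NormedAddCommGroup K₂] [InnerProductSpace ℂ K₂] [CompleteSpace K₂]
    (ind₁ : InducedSpace M.inner φ₁.toFun K₁) (ind₂ : InducedSpace M.inner φ₂.toFun K₂)
    (ψ₁ : RepOn A K₁) (hψ₁ : IsInducedRep act.Φ ind₁ ψ₁)
    (ψ₂ : RepOn A K₂) (hψ₂ : IsInducedRep act.Φ ind₂ ψ₂) :
    ∃ V : K₁ ≃ₗᵢ[ℂ] K₂,
      (∀ ξ h, V (ind₁.ι ξ h) = ind₂.ι ξ (U h)) ∧
      ∀ a k, V (ψ₁.toFun a k) = ψ₂.toFun a (V k) := by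
  let t : E × H₁ → K₂ := Function.uncurry ind₂.ι ∘ Prod.map id U
  have hgram : ∀ p q : E × H₁,
      ⟪Function.uncurry ind₁.ι p, Function.uncurry ind₁.ι q⟫_ℂ = ⟪t p, t q⟫_ℂ := by
    rintro ⟨ξ, h⟩ ⟨η, h'⟩
    simp only [t, Function.comp_apply, Prod.map_apply, id, Function.uncurry_apply_pair,
      ind₁.inner_eq, ind₂.inner_eq, ← hU, LinearIsometryEquiv.inner_map_map]
  have ht : Set.range t = Set.range (Function.uncurry ind₂.ι) :=
    (Function.surjective_id.prodMap U.surjective).range_comp (Function.uncurry ind₂.ι)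
  obtain ⟨V, hV⟩ := exists_linearIsometryEquiv_of_inner_eq hgram
    ind₁.dense_span_range_uncurry (ht ▸ ind₂.dense_span_range_uncurry)
  have hVι : ∀ ξ h, V (ind₁.ι ξ h) = ind₂.ι ξ (U h) := fun ξ h => hV (ξ, h)
  refine ⟨V, hVι, fun a => DFunLike.congr_fun (?_ : (V : K₁ →L[ℂ] K₂).comp (ψ₁.toFun a) =
    (ψ₂.toFun a).comp (V : K₁ →L[ℂ] K₂))⟩
  refine ContinuousLinearMap.ext_on ind₁.dense ?_
  rintro _ ⟨ξ, h, rfl⟩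
  simp [hψ₁ a ξ h, hψ₂ a ξ (U h), hVι]

/-- Rieffel induction preserves unitary equivalence: if `(φ₁,H₁)` and
`(φ₂,H₂)` are unitarily equivalent (via `U`) non-degenerate representations of `B` and
`A` acts non-degenerately on the Hilbert `B`-module `E`, then `ξ ⊗ h ↦ ξ ⊗ Uh`
extends to a unitary intertwining the induced representations of `A`. -/
theorem statement6 (A : Type u) [Ring A] [StarRing A] [Algebra ℂ A] [UniformSpace A] [IsUniformAddGroup A]
    [IsTopologicalRing A] [ContinuousStar A] [ContinuousSMul ℂ A] [CompleteSpace A] [T2Space A] (hA : IsLocallyCStarAlgebra A)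
    (B : Type u) [Ring B] [StarRing B] [Algebra ℂ B] [UniformSpace B] [IsUniformAddGroup B]
    [IsTopologicalRing B] [ContinuousStar B] [ContinuousSMul ℂ B] [CompleteSpace B] [T2Space B] (hB : IsLocallyCStarAlgebra B)
    (E : Type u) [AddCommGroup E] [Module ℂ E] [UniformSpace E] [IsUniformAddGroup E] [ContinuousSMul ℂ E] (M : HilbertModule B E) (act : ModuleAction A M)
    (H₁ : Type u) [NormedAddCommGroup H₁] [InnerProductSpace ℂ H₁] [CompleteSpace H₁]
    (H₂ : Type u) [NormedAddCommGroup H₂] [InnerProductSpace ℂ H₂] [CompleteSpace H₂]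
    (φ₁ : RepOn B H₁) (hφ₁ : φ₁.Nondegenerate)
    (φ₂ : RepOn B H₂) (hφ₂ : φ₂.Nondegenerate)
    (U : H₁ ≃ₗᵢ[ℂ] H₂) (hU : ∀ b h, U (φ₁.toFun b h) = φ₂.toFun b (U h))
    (K₁ : Type u) [NormedAddCommGroup K₁] [InnerProductSpace ℂ K₁] [CompleteSpace K₁]
    (K₂ : Type u) [NormedAddCommGroup K₂] [InnerProductSpace ℂ K₂] [CompleteSpace K₂]
    (ind₁ : InducedSpace M.inner φ₁.toFun K₁) (ind₂ : InducedSpace M.inner φ₂.toFun K₂)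
    (ψ₁ : RepOn A K₁) (hψ₁ : IsInducedRep act.Φ ind₁ ψ₁)
    (ψ₂ : RepOn A K₂) (hψ₂ : IsInducedRep act.Φ ind₂ ψ₂) :
    ∃ V : K₁ ≃ₗᵢ[ℂ] K₂,
      (∀ ξ h, V (ind₁.ι ξ h) = ind₂.ι ξ (U h)) ∧
      ∀ a k, V (ψ₁.toFun a k) = ψ₂.toFun a (V k) :=
  statement6_general A B E M act H₁ H₂ φ₁ φ₂ U hU K₁ K₂ ind₁ ind₂ ψ₁ hψ₁ ψ₂ hψ₂
end
end

section
/- Let A, B be locally C*-algebras, E a Hilbert B-module with non-degenerate continuous action of A, and let (φ, H) = (⊕_{i∈I} φ_i, ⊕_{i∈I} H_i) be a direct sum of non-degenerate representations of B. Then the induced representation (_E^Aφ, _EH) of A is unitarily equivalent to the direct sum (⊕_{i∈I} _E^Aφ_i, ⊕_{i∈I} _EH_i). -/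
noncomputable section

open Filter Topology Set
open scoped InnerProductSpace

universe u v w

/-! An induced space `E ⊗_φ H` is determined up to a unitary fixing the generators `ξ ⊗ h` by
its Gram data `⟪ξ ⊗ h₁, η ⊗ h₂⟫ = ⟪h₁, φ⟨ξ, η⟩ h₂⟫` and the density of their span. Since `φ`
acts diagonally on `⊕ᵢ Hᵢ`, the vectors `(ξ ⊗ xᵢ)ᵢ ∈ ⊕ᵢ (E ⊗_{φᵢ} Hᵢ)` have this Gram data, and
their span is dense because it contains every `single i (ξ ⊗ w)`. The resulting unitary
intertwines the induced representations, as both act by `a · (ξ ⊗ h) = Φ(a)ξ ⊗ h` on a total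
set. -/

section GramEquiv

open Finsupp

variable {𝕜 ι E F : Type*} [RCLike 𝕜]
  [NormedAddCommGroup E] [InnerProductSpace 𝕜 E] [NormedAddCommGroup F] [InnerProductSpace 𝕜 F]
  {v : ι → E} {w : ι → F}

theorem inner_linearCombination_eq_of_inner_eq_s10 (h : ∀ i j, ⟪w i, w j⟫_𝕜 = ⟪v i, v j⟫_𝕜)
    (l m : ι →₀ 𝕜) :
    ⟪linearCombination 𝕜 w l, linearCombination 𝕜 w m⟫_𝕜 =
      ⟪linearCombination 𝕜 v l, linearCombination 𝕜 v m⟫_𝕜 := by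
  simp only [linearCombination_apply, Finsupp.sum_inner, Finsupp.inner_sum, inner_smul_left,
    inner_smul_right, h]

theorem norm_linearCombination_eq_of_inner_eq_s10 (h : ∀ i j, ⟪w i, w j⟫_𝕜 = ⟪v i, v j⟫_𝕜)
    (l : ι →₀ 𝕜) : ‖linearCombination 𝕜 w l‖ = ‖linearCombination 𝕜 v l‖ := by
  rw [norm_eq_sqrt_re_inner (𝕜 := 𝕜), norm_eq_sqrt_re_inner (𝕜 := 𝕜),
    inner_linearCombination_eq_of_inner_eq_s10 h]

theorem ker_linearCombination_eq_of_inner_eq (h : ∀ i j, ⟪w i, w j⟫_𝕜 = ⟪v i, v j⟫_𝕜) :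
    LinearMap.ker (linearCombination 𝕜 w) = LinearMap.ker (linearCombination 𝕜 v) := by
  ext l
  simp only [LinearMap.mem_ker, ← norm_eq_zero (E := F), ← norm_eq_zero (E := E),
    norm_linearCombination_eq_of_inner_eq_s10 h]

theorem denseRange_liftQ_ker_linearCombination {u : ι → E}
    (hu : Dense (Submodule.span 𝕜 (range u) : Set E)) :
    DenseRange ((LinearMap.ker (linearCombination 𝕜 u)).liftQ _ le_rfl) := by
  rwa [DenseRange, ← LinearMap.coe_range, Submodule.range_liftQ, range_linearCombination]

theorem exists_linearIsometryEquiv_of_inner_eq_s10 [CompleteSpace E] [CompleteSpace F]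
    (hv : Dense (Submodule.span 𝕜 (range v) : Set E))
    (hw : Dense (Submodule.span 𝕜 (range w) : Set F))
    (h : ∀ i j, ⟪w i, w j⟫_𝕜 = ⟪v i, v j⟫_𝕜) :
    ∃ U : E ≃ₗᵢ[𝕜] F, ∀ i, U (v i) = w i := by
  let e : ((ι →₀ 𝕜) ⧸ LinearMap.ker (linearCombination 𝕜 v)) ≃ₗ[𝕜]
      ((ι →₀ 𝕜) ⧸ LinearMap.ker (linearCombination 𝕜 w)) :=
    Submodule.quotEquivOfEq _ _ (ker_linearCombination_eq_of_inner_eq h).symm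
  have he : ∀ x, ‖(LinearMap.ker (linearCombination 𝕜 w)).liftQ _ le_rfl (e x)‖ =
      ‖(LinearMap.ker (linearCombination 𝕜 v)).liftQ _ le_rfl x‖ := by
    intro x
    induction x using Submodule.Quotient.induction_on with
    | _ l => exact norm_linearCombination_eq_of_inner_eq_s10 h l
  refine ⟨e.extendOfIsometry _ _ (denseRange_liftQ_ker_linearCombination hv)
    (denseRange_liftQ_ker_linearCombination hw) he, fun i => ?_⟩
  have := e.extendOfIsometry_eq _ _ (denseRange_liftQ_ker_linearCombination hv)
    (denseRange_liftQ_ker_linearCombination hw) he (Submodule.Quotient.mk (single i 1))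
  simpa [e] using this

end GramEquiv

theorem lp.dense_span_iUnion_single {𝕜 ι : Type*} [NormedRing 𝕜] [DecidableEq ι] {E : ι → Type*}
    [∀ i, NormedAddCommGroup (E i)] [∀ i, Module 𝕜 (E i)] [∀ i, IsBoundedSMul 𝕜 (E i)]
    {p : ENNReal} [Fact (1 ≤ p)] (hp : p ≠ ⊤) {s : ∀ i, Set (E i)}
    (hs : ∀ i, Dense (Submodule.span 𝕜 (s i) : Set (E i))) :
    Dense (Submodule.span 𝕜 (⋃ i, lp.single p i '' s i) : Set (lp E p)) := by
  set S := Submodule.span 𝕜 (⋃ i, lp.single p i '' s i)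
  have hsingle : ∀ i x, lp.single p i x ∈ S.topologicalClosure := by
    intro i
    have hclosed : IsClosed (lp.singleContinuousLinearMap 𝕜 E p i ⁻¹' S.topologicalClosure) :=
      S.isClosed_topologicalClosure.preimage (lp.singleContinuousLinearMap 𝕜 E p i).continuous
    have hspan : Submodule.span 𝕜 (s i) ≤
        S.topologicalClosure.comap (lp.singleContinuousLinearMap 𝕜 E p i).toLinearMap :=
      Submodule.span_le.mpr fun x hx => S.le_topologicalClosure
        (Submodule.subset_span (mem_iUnion.mpr ⟨i, x, hx, rfl⟩))
    exact fun x => hclosed.closure_subset_iff.mpr hspan (hs i x)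
  rw [Submodule.dense_iff_topologicalClosure_eq_top, Submodule.eq_top_iff']
  exact fun f => S.isClosed_topologicalClosure.mem_of_tendsto (lp.hasSum_single hp f)
    (Eventually.of_forall fun t => Submodule.sum_mem _ fun i _ => hsingle i (f i))

namespace InducedSpace

section Uniqueness

variable {B E H K K' : Type*} [NormedAddCommGroup H] [InnerProductSpace ℂ H] [CompleteSpace H]
  [NormedAddCommGroup K] [InnerProductSpace ℂ K] [CompleteSpace K]
  [NormedAddCommGroup K'] [InnerProductSpace ℂ K'] [CompleteSpace K']
  {innerE : E → E → B} {φ : B → H →L[ℂ] H}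

theorem ι_zero_right (ind : InducedSpace innerE φ K) (ξ : E) : ind.ι ξ 0 = 0 :=
  inner_self_eq_zero.mp (by rw [ind.inner_eq]; simp)

theorem range_uncurry_ι (ind : InducedSpace innerE φ K) :
    range (Function.uncurry ind.ι) = {k | ∃ ξ h, k = ind.ι ξ h} := by
  ext k
  simp [eq_comm]

theorem exists_linearIsometryEquiv (ind : InducedSpace innerE φ K)
    (ind' : InducedSpace innerE φ K') :
    ∃ U : K ≃ₗᵢ[ℂ] K', ∀ ξ h, U (ind.ι ξ h) = ind'.ι ξ h := by
  have hv : Dense (Submodule.span ℂ (range (Function.uncurry ind.ι)) : Set K) := by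
    rw [range_uncurry_ι]; exact ind.dense
  have hw : Dense (Submodule.span ℂ (range (Function.uncurry ind'.ι)) : Set K') := by
    rw [range_uncurry_ι]; exact ind'.dense
  obtain ⟨U, hU⟩ := exists_linearIsometryEquiv_of_inner_eq_s10 hv hw
    fun d e => by simp only [Function.uncurry, ind.inner_eq, ind'.inner_eq]
  exact ⟨U, fun ξ h => hU (ξ, h)⟩

theorem ext_continuousLinearMap {F : Type*} [AddCommGroup F] [Module ℂ F] [TopologicalSpace F]
    [T2Space F] (ind : InducedSpace innerE φ K) {S T : K →L[ℂ] F}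
    (h : ∀ ξ x, S (ind.ι ξ x) = T (ind.ι ξ x)) : S = T :=
  ContinuousLinearMap.ext_on ind.dense (by rintro _ ⟨ξ, x, rfl⟩; exact h ξ x)

end Uniqueness

section DirectSum

variable {B E I : Type*} {H Ki : I → Type*}
  [∀ i, NormedAddCommGroup (H i)] [∀ i, InnerProductSpace ℂ (H i)] [∀ i, CompleteSpace (H i)]
  [∀ i, NormedAddCommGroup (Ki i)] [∀ i, InnerProductSpace ℂ (Ki i)] [∀ i, CompleteSpace (Ki i)]
  {innerE : E → E → B} {φi : ∀ i, B → H i →L[ℂ] H i} {φ : B → lp H 2 →L[ℂ] lp H 2}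

theorem hasSum_inner_ι (indi : ∀ i, InducedSpace innerE (φi i) (Ki i))
    (hsum : ∀ b (x : lp H 2) i, (φ b x : ∀ i, H i) i = φi i b (x i)) (ξ η : E) (x y : lp H 2) :
    HasSum (fun i => ⟪(indi i).ι ξ (x i), (indi i).ι η (y i)⟫_ℂ) ⟪x, φ (innerE ξ η) y⟫_ℂ := by
  have hterm : ∀ i, ⟪(indi i).ι ξ (x i), (indi i).ι η (y i)⟫_ℂ =
      ⟪x i, (φ (innerE ξ η) y : ∀ i, H i) i⟫_ℂ := fun i => by rw [(indi i).inner_eq, hsum]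
  simpa only [hterm] using lp.hasSum_inner (𝕜 := ℂ) x (φ (innerE ξ η) y)

theorem memℓp_ι (indi : ∀ i, InducedSpace innerE (φi i) (Ki i))
    (hsum : ∀ b (x : lp H 2) i, (φ b x : ∀ i, H i) i = φi i b (x i)) (ξ : E) (x : lp H 2) :
    Memℓp (fun i => (indi i).ι ξ (x i)) 2 := by
  refine memℓp_gen ?_
  have := (Complex.hasSum_re (hasSum_inner_ι indi hsum ξ ξ x x)).summable
  simpa [inner_self_eq_norm_sq_to_K, ← Complex.ofReal_pow] using this

def directSum (indi : ∀ i, InducedSpace innerE (φi i) (Ki i))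
    (hsum : ∀ b (x : lp H 2) i, (φ b x : ∀ i, H i) i = φi i b (x i)) :
    InducedSpace innerE φ (lp Ki 2) where
  ι ξ x := ⟨fun i => (indi i).ι ξ (x i), memℓp_ι indi hsum ξ x⟩
  inner_eq ξ η x y := (lp.hasSum_inner _ _).unique (hasSum_inner_ι indi hsum ξ η x y)
  dense := by
    classical
    refine (lp.dense_span_iUnion_single (by simp) fun i => (indi i).dense).mono
      (Submodule.span_mono ?_)
    simp only [iUnion_subset_iff, image_subset_iff]
    rintro i _ ⟨ξ, w, rfl⟩
    refine ⟨ξ, lp.single 2 i w, lp.ext (funext fun j => ?_)⟩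
    by_cases hj : j = i
    · subst hj; simp
    · simp [Pi.single_eq_of_ne hj, ι_zero_right]

end DirectSum

end InducedSpace

theorem statement10_general (A : Type u) [Ring A] [StarRing A] [Algebra ℂ A] [UniformSpace A]
    (B : Type u) [Ring B] [StarRing B] [Algebra ℂ B] [UniformSpace B]
    (E : Type u) [AddCommGroup E] [Module ℂ E] [UniformSpace E]
    (M : HilbertModule B E) (act : ModuleAction A M)
    (I : Type u) (H : I → Type u)
    [∀ i, NormedAddCommGroup (H i)] [∀ i, InnerProductSpace ℂ (H i)]
    [∀ i, CompleteSpace (H i)]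
    (φi : ∀ i, RepOn B (H i))
    (φ : RepOn B (lp H 2))
    (hsum : ∀ b (x : lp H 2) i, (φ.toFun b x : ∀ i, H i) i = (φi i).toFun b (x i))
    (Ki : I → Type u)
    [∀ i, NormedAddCommGroup (Ki i)] [∀ i, InnerProductSpace ℂ (Ki i)]
    [∀ i, CompleteSpace (Ki i)]
    (K : Type u) [NormedAddCommGroup K] [InnerProductSpace ℂ K] [CompleteSpace K]
    (ind : InducedSpace M.inner φ.toFun K)
    (indi : ∀ i, InducedSpace M.inner (φi i).toFun (Ki i))
    (ψ : RepOn A K) (hψ : IsInducedRep act.Φ ind ψ)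
    (ψi : ∀ i, RepOn A (Ki i)) (hψi : ∀ i, IsInducedRep act.Φ (indi i) (ψi i)) :
    ∃ U : K ≃ₗᵢ[ℂ] lp Ki 2,
      (∀ ξ (h : lp H 2) i, (U (ind.ι ξ h) : ∀ i, Ki i) i = (indi i).ι ξ (h i)) ∧
      ∀ a k i, (U (ψ.toFun a k) : ∀ i, Ki i) i = (ψi i).toFun a ((U k : ∀ i, Ki i) i) := by
  obtain ⟨U, hU⟩ := ind.exists_linearIsometryEquiv (InducedSpace.directSum indi hsum)
  refine ⟨U, fun ξ h i => by rw [hU]; rfl, fun a k i => ?_⟩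
  let Ui : K →L[ℂ] Ki i :=
    (lp.evalCLM ℂ Ki 2 i).comp (U.toContinuousLinearEquiv : K →L[ℂ] lp Ki 2)
  have hintertwine : Ui.comp (ψ.toFun a) = ((ψi i).toFun a).comp Ui :=
    ind.ext_continuousLinearMap fun ξ x => by
      change (U (ψ.toFun a (ind.ι ξ x)) : ∀ i, Ki i) i = (ψi i).toFun a ((U (ind.ι ξ x)) i)
      rw [hψ, hU, hU]
      exact (hψi i a ξ (x i)).symm
  exact congr($hintertwine k)

/-- Rieffel induction commutes with direct sums: if
`(φ, H) = (⊕ᵢ φᵢ, ⊕ᵢ Hᵢ)` is a direct sum of non-degenerate representations of `B`,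
then the induced representation `(_E^Aφ, _EH)` of `A` is unitarily equivalent to
`(⊕ᵢ _E^Aφᵢ, ⊕ᵢ _EHᵢ)`. -/
theorem statement10 (A : Type u) [Ring A] [StarRing A] [Algebra ℂ A] [UniformSpace A] [IsUniformAddGroup A]
    [IsTopologicalRing A] [ContinuousStar A] [ContinuousSMul ℂ A] [CompleteSpace A] [T2Space A] (hA : IsLocallyCStarAlgebra A)
    (B : Type u) [Ring B] [StarRing B] [Algebra ℂ B] [UniformSpace B] [IsUniformAddGroup B]
    [IsTopologicalRing B] [ContinuousStar B] [ContinuousSMul ℂ B] [CompleteSpace B] [T2Space B] (hB : IsLocallyCStarAlgebra B)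
    (E : Type u) [AddCommGroup E] [Module ℂ E] [UniformSpace E] [IsUniformAddGroup E]
    [ContinuousSMul ℂ E]
    (M : HilbertModule B E) (act : ModuleAction A M)
    (I : Type u) (H : I → Type u)
    [∀ i, NormedAddCommGroup (H i)] [∀ i, InnerProductSpace ℂ (H i)]
    [∀ i, CompleteSpace (H i)]
    (φi : ∀ i, RepOn B (H i)) (hφi : ∀ i, (φi i).Nondegenerate)
    (φ : RepOn B (lp H 2)) (hφ : (φ : RepOn B (lp H 2)).Nondegenerate)
    (hsum : ∀ b (x : lp H 2) i, (φ.toFun b x : ∀ i, H i) i = (φi i).toFun b (x i))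
    (Ki : I → Type u)
    [∀ i, NormedAddCommGroup (Ki i)] [∀ i, InnerProductSpace ℂ (Ki i)]
    [∀ i, CompleteSpace (Ki i)]
    (K : Type u) [NormedAddCommGroup K] [InnerProductSpace ℂ K] [CompleteSpace K]
    (ind : InducedSpace M.inner φ.toFun K)
    (indi : ∀ i, InducedSpace M.inner (φi i).toFun (Ki i))
    (ψ : RepOn A K) (hψ : IsInducedRep act.Φ ind ψ)
    (ψi : ∀ i, RepOn A (Ki i)) (hψi : ∀ i, IsInducedRep act.Φ (indi i) (ψi i)) :
    ∃ U : K ≃ₗᵢ[ℂ] lp Ki 2,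
      (∀ ξ (h : lp H 2) i, (U (ind.ι ξ h) : ∀ i, Ki i) i = (indi i).ι ξ (h i)) ∧
      ∀ a k i, (U (ψ.toFun a k) : ∀ i, Ki i) i = (ψi i).toFun a ((U k : ∀ i, Ki i) i) :=
  statement10_general A B E M act I H φi φ hsum Ki K ind indi ψ hψ ψi hψi
end
end

section
/- (Induction in stages) Let A, B, C be locally C*-algebras, E a Hilbert B-module, F a Hilbert C-module, and Φ₁ : A → L_B(E), Φ₂ : B → L_C(F) non-degenerate continuous *-morphisms. Let G = E ⊗_{Φ₂} F be the inner tensor product, with A acting via (Φ₂)_* ∘ Φ₁. Then for every non-degenerate representation (φ, H) of C, the representation of A induced from φ via G is unitarily equivalent to the representation of A induced via E from the representation of B induced from φ via F: (_G^Aφ, _GH) ≅ (_E^A(_F^Bφ), _E(_FH)). -/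
noncomputable section

open Filter Topology Set
open scoped InnerProductSpace

universe u v w

/-!
The vectors `(ξ ⊗ η) ⊗ h` span a dense subspace of `G ⊗_φ H`, the vectors `ξ ⊗ (η ⊗ h)` span a
dense subspace of `E ⊗_{ψF} (F ⊗_φ H)`, and the two families have the same Gram matrix:
both `⟪(ξ₁ ⊗ η₁) ⊗ h₁, (ξ₂ ⊗ η₂) ⊗ h₂⟫` and `⟪ξ₁ ⊗ (η₁ ⊗ h₁), ξ₂ ⊗ (η₂ ⊗ h₂)⟫` equal
`⟪h₁, φ ⟨η₁, Φ₂ ⟨ξ₁, ξ₂⟩ η₂⟩ h₂⟫`. Hence `(ξ ⊗ η) ⊗ h ↦ ξ ⊗ (η ⊗ h)` extends to a unitary, and it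
intertwines the two representations of `A`, which both act on the `E`-factor only.
For the density of the first family, `x ↦ x ⊗ h` must be continuous on `G`:
`‖x ⊗ h‖² ≤ ‖φ ⟨x, x⟩‖ ‖h‖²`, and `⟨x, x⟩ → 0` in `C` as `x → 0` because the topology of `C`
is given by its C*-seminorms.
-/

open Submodule

section TopologicalModule

variable {R X M : Type*} [Semiring R] [TopologicalSpace X] [AddCommMonoid X] [Module R X]
  [TopologicalSpace M] [AddCommMonoid M] [Module R M] [ContinuousConstSMul R M] [ContinuousAdd M]

theorem dense_span_of_subset_topologicalClosure {s t : Set M} (hs : Dense (span R s : Set M))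
    (hst : s ⊆ (span R t).topologicalClosure) : Dense (span R t : Set M) := by
  rw [dense_iff_topologicalClosure_eq_top] at hs ⊢
  exact eq_top_iff.2 <| hs ▸ topologicalClosure_minimal _ (span_le.2 hst)
    (isClosed_topologicalClosure _)

theorem ContinuousLinearMap.apply_mem_topologicalClosure_span (L : X →L[R] M) {s : Set X}
    {t : Set M} (hs : Dense (span R s : Set X)) (hst : Set.MapsTo L s t) (x : X) :
    L x ∈ (span R t).topologicalClosure := by
  have hx : L x ∈ closure ((span R s).map (L : X →ₗ[R] M) : Set M) := by
    rw [map_coe]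
    exact image_closure_subset_closure_image L.continuous ⟨x, hs x, rfl⟩
  rw [← span_image, ← topologicalClosure_coe] at hx
  exact topologicalClosure_mono (span_mono (image_subset_iff.2 hst)) hx

end TopologicalModule

theorem exists_linearIsometryEquiv_apply_eq_of_inner_eq {𝕜 X K₁ K₂ : Type*} [RCLike 𝕜]
    [NormedAddCommGroup K₁] [InnerProductSpace 𝕜 K₁] [CompleteSpace K₁]
    [NormedAddCommGroup K₂] [InnerProductSpace 𝕜 K₂] [CompleteSpace K₂]
    (f : X → K₁) (g : X → K₂) (hfg : ∀ x y, ⟪f x, f y⟫_𝕜 = ⟪g x, g y⟫_𝕜)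
    (hf : Dense (span 𝕜 (range f) : Set K₁)) (hg : Dense (span 𝕜 (range g) : Set K₂)) :
    ∃ U : K₁ ≃ₗᵢ[𝕜] K₂, ∀ x, U (f x) = g x := by
  set Lf := Finsupp.linearCombination 𝕜 f
  set Lg := Finsupp.linearCombination 𝕜 g
  have hLf : DenseRange Lf := by
    rwa [DenseRange, ← LinearMap.coe_range, Finsupp.range_linearCombination]
  have hLg : DenseRange Lg := by
    rwa [DenseRange, ← LinearMap.coe_range, Finsupp.range_linearCombination]
  have hinner : ∀ v w, ⟪Lg v, Lg w⟫_𝕜 = ⟪Lf v, Lf w⟫_𝕜 := fun v w => by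
    simp only [Lf, Lg, Finsupp.linearCombination_apply, Finsupp.sum, sum_inner, inner_sum,
      inner_smul_left, inner_smul_right, hfg]
  have hnorm : ∀ v, ‖Lg (LinearEquiv.refl 𝕜 _ v)‖ = ‖Lf v‖ := fun v => by
    rw [LinearEquiv.refl_apply, @norm_eq_sqrt_re_inner 𝕜, @norm_eq_sqrt_re_inner 𝕜, hinner]
  refine ⟨(LinearEquiv.refl 𝕜 _).extendOfIsometry Lf Lg hLf hLg hnorm, fun x => ?_⟩
  simpa [Lf, Lg] using LinearEquiv.extendOfIsometry_eq _ Lf Lg hLf hLg hnorm (Finsupp.single x 1)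

theorem unitarilyEquiv_of_apply_eq_on_dense_span {A H₁ H₂ : Type*} [Ring A] [StarRing A]
    [Algebra ℂ A] [TopologicalSpace A]
    [NormedAddCommGroup H₁] [InnerProductSpace ℂ H₁] [CompleteSpace H₁]
    [NormedAddCommGroup H₂] [InnerProductSpace ℂ H₂] [CompleteSpace H₂]
    {ψ₁ : RepOn A H₁} {ψ₂ : RepOn A H₂} (U : H₁ ≃ₗᵢ[ℂ] H₂) {s : Set H₁}
    (hs : Dense (span ℂ s : Set H₁)) (hU : ∀ a, ∀ v ∈ s, U (ψ₁.toFun a v) = ψ₂.toFun a (U v)) :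
    UnitarilyEquiv ψ₁ ψ₂ := by
  let V : H₁ →L[ℂ] H₂ := U.toContinuousLinearEquiv.toContinuousLinearMap
  refine ⟨U, fun a => DFunLike.congr_fun (?_ : V.comp (ψ₁.toFun a) = (ψ₂.toFun a).comp V)⟩
  exact ContinuousLinearMap.ext_on hs (hU a)

theorem RepOn.map_zero {A H : Type*} [Ring A] [StarRing A] [Algebra ℂ A] [TopologicalSpace A]
    [NormedAddCommGroup H] [InnerProductSpace ℂ H] [CompleteSpace H] (φ : RepOn A H) :
    φ.toFun 0 = 0 := by
  simpa using φ.map_add 0 0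

theorem HilbertModule.tendsto_inner_self_nhds_zero {A E : Type*} [Ring A] [StarRing A]
    [Algebra ℂ A] [UniformSpace A] (hA : IsLocallyCStarAlgebra A) [AddCommGroup E] [Module ℂ E]
    [UniformSpace E] (M : HilbertModule A E) :
    Tendsto (fun ξ => M.inner ξ ξ) (𝓝 0) (𝓝 0) := by
  refine tendsto_map'_iff.1 <| (hA _).2 fun p => tendsto_map'_iff.2 ?_
  have hsqrt := ((M.topology_eq (𝓝 0)).1 tendsto_id p).pow 2
  rw [zero_pow two_ne_zero] at hsqrt
  exact hsqrt.congr fun ξ => Real.sq_sqrt (p.nonneg' _)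

namespace InducedSpace

section

variable {B E H K : Type*} [NormedAddCommGroup H] [InnerProductSpace ℂ H] [CompleteSpace H]
  [NormedAddCommGroup K] [InnerProductSpace ℂ K] [CompleteSpace K]
  {innerE : E → E → B} {φ : B → H →L[ℂ] H} (ind : InducedSpace innerE φ K)

theorem ext_inner {x y : K} (h : ∀ ξ k, ⟪x, ind.ι ξ k⟫_ℂ = ⟪y, ind.ι ξ k⟫_ℂ) : x = y :=
  innerSL_inj.1 <| ContinuousLinearMap.ext_on ind.dense <| by rintro _ ⟨ξ, k, rfl⟩; exact h ξ k

theorem ι_add_right (ξ : E) (h₁ h₂ : H) : ind.ι ξ (h₁ + h₂) = ind.ι ξ h₁ + ind.ι ξ h₂ :=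
  ind.ext_inner fun η k => by simp only [inner_add_left, ind.inner_eq]

theorem ι_smul_right (ξ : E) (c : ℂ) (h : H) : ind.ι ξ (c • h) = c • ind.ι ξ h :=
  ind.ext_inner fun η k => by simp only [inner_smul_left, ind.inner_eq]

theorem norm_ι_le (ξ : E) (h : H) : ‖ind.ι ξ h‖ ≤ √‖φ (innerE ξ ξ)‖ * ‖h‖ := by
  rw [← Real.sqrt_sq (norm_nonneg h), ← Real.sqrt_mul (norm_nonneg _)]
  refine Real.le_sqrt_of_sq_le ?_
  calc ‖ind.ι ξ h‖ ^ 2 = RCLike.re ⟪h, φ (innerE ξ ξ) h⟫_ℂ := by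
        rw [@norm_sq_eq_re_inner ℂ, ind.inner_eq]
    _ ≤ ‖h‖ * ‖φ (innerE ξ ξ) h‖ := re_inner_le_norm _ _
    _ ≤ ‖h‖ * (‖φ (innerE ξ ξ)‖ * ‖h‖) := by gcongr; exact (φ _).le_opNorm h
    _ = ‖φ (innerE ξ ξ)‖ * ‖h‖ ^ 2 := by ring

def ιL₂ (ξ : E) : H →L[ℂ] K :=
  LinearMap.mkContinuous
    { toFun := ind.ι ξ, map_add' := ind.ι_add_right ξ, map_smul' := ind.ι_smul_right ξ }
    _ (ind.norm_ι_le ξ)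

end

variable {C G H K : Type*} [Ring C] [StarRing C] [Algebra ℂ C] [UniformSpace C]
  [AddCommGroup G] [Module ℂ G] [UniformSpace G]
  [NormedAddCommGroup H] [InnerProductSpace ℂ H] [CompleteSpace H]
  [NormedAddCommGroup K] [InnerProductSpace ℂ K] [CompleteSpace K]
  {P : HilbertModule C G} {φ : RepOn C H} (ind : InducedSpace P.inner φ.toFun K)

theorem inner_ι_ι_eq_inner_apply (x y : G) (h k : H) :
    ⟪ind.ι x h, ind.ι y k⟫_ℂ = ⟪φ.toFun (P.inner y x) h, k⟫_ℂ := by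
  rw [ind.inner_eq, ← P.star_inner, φ.map_star, ContinuousLinearMap.adjoint_inner_right]

theorem ι_add_left (x y : G) (h : H) : ind.ι (x + y) h = ind.ι x h + ind.ι y h :=
  ind.ext_inner fun η k => by
    simp only [inner_add_left, ind.inner_ι_ι_eq_inner_apply, P.inner_add_right, φ.map_add,
      add_apply]

theorem ι_smul_left (c : ℂ) (x : G) (h : H) : ind.ι (c • x) h = c • ind.ι x h :=
  ind.ext_inner fun η k => by
    simp only [inner_smul_left, ind.inner_ι_ι_eq_inner_apply, P.inner_smulC, φ.map_smulC,
      smul_apply]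

def ιL₁ [IsUniformAddGroup G] (hC : IsLocallyCStarAlgebra C) (h : H) : G →L[ℂ] K :=
  let L : G →ₗ[ℂ] K :=
    { toFun := (ind.ι · h)
      map_add' := fun x y => ind.ι_add_left x y h
      map_smul' := fun c x => ind.ι_smul_left c x h }
  ⟨L, continuous_of_continuousAt_zero L <| by
    rw [ContinuousAt, map_zero, tendsto_zero_iff_norm_tendsto_zero]
    have hφ : Tendsto (fun x => φ.toFun (P.inner x x)) (𝓝 0) (𝓝 0) :=
      φ.map_zero ▸ (φ.continuous.tendsto 0).comp (P.tendsto_inner_self_nhds_zero hC)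
    refine squeeze_zero (fun _ => norm_nonneg _) (fun x => ind.norm_ι_le x h) ?_
    simpa using hφ.norm.sqrt.mul_const ‖h‖⟩

end InducedSpace

theorem statement11_general (A : Type u) [Ring A] [StarRing A] [Algebra ℂ A] [UniformSpace A]
    (B : Type u) [Ring B] [StarRing B] [Algebra ℂ B] [UniformSpace B]
    (C : Type u) [Ring C] [StarRing C] [Algebra ℂ C] [UniformSpace C] (hC : IsLocallyCStarAlgebra C)
    (E : Type u) [AddCommGroup E] [Module ℂ E] [UniformSpace E]
    (F : Type u) [AddCommGroup F] [Module ℂ F] [UniformSpace F]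
    (M : HilbertModule B E) (N : HilbertModule C F)
    (act1 : ModuleAction A M) (act2 : ModuleAction B N)
    -- the inner tensor product G = E ⊗_{Φ₂} F
    (G : Type u) [AddCommGroup G] [Module ℂ G] [UniformSpace G] [IsUniformAddGroup G]
    (P : HilbertModule C G) (τ : E → F → G)
    (hτ_inner : ∀ ξ₁ η₁ ξ₂ η₂,
      P.inner (τ ξ₁ η₁) (τ ξ₂ η₂) = N.inner η₁ (act2.Φ (M.inner ξ₁ ξ₂) η₂))
    (hτ_dense : Dense (↑(Submodule.span ℂ {x : G | ∃ ξ η, x = τ ξ η}) : Set G))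
    -- A acts on G via (Φ₂)_* ∘ Φ₁
    (actG : ModuleAction A P)
    (hactG : ∀ a ξ η, actG.Φ a (τ ξ η) = τ (act1.Φ a ξ) η)
    -- a non-degenerate representation of C
    (H : Type u) [NormedAddCommGroup H] [InnerProductSpace ℂ H] [CompleteSpace H]
    (φ : RepOn C H)
    -- induction via G
    (KG : Type u) [NormedAddCommGroup KG] [InnerProductSpace ℂ KG] [CompleteSpace KG]
    (indG : InducedSpace P.inner φ.toFun KG)
    (ψG : RepOn A KG) (hψG : IsInducedRep actG.Φ indG ψG)
    -- induction via F, giving a representation of B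
    (KF : Type u) [NormedAddCommGroup KF] [InnerProductSpace ℂ KF] [CompleteSpace KF]
    (indF : InducedSpace N.inner φ.toFun KF)
    (ψF : RepOn B KF) (hψF : IsInducedRep act2.Φ indF ψF)
    -- then induction via E from (ψF, KF)
    (K2 : Type u) [NormedAddCommGroup K2] [InnerProductSpace ℂ K2] [CompleteSpace K2]
    (ind2 : InducedSpace M.inner ψF.toFun K2)
    (ψ2 : RepOn A K2) (hψ2 : IsInducedRep act1.Φ ind2 ψ2) :
    UnitarilyEquiv ψG ψ2 := by
  set f : E × F × H → KG := fun x => indG.ι (τ x.1 x.2.1) x.2.2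
  set g : E × F × H → K2 := fun x => ind2.ι x.1 (indF.ι x.2.1 x.2.2)
  have hfg : ∀ x y, ⟪f x, f y⟫_ℂ = ⟪g x, g y⟫_ℂ := by
    rintro ⟨ξ₁, η₁, h₁⟩ ⟨ξ₂, η₂, h₂⟩
    rw [indG.inner_eq, hτ_inner, ind2.inner_eq, hψF, indF.inner_eq]
  have hf : Dense (span ℂ (range f) : Set KG) := by
    refine dense_span_of_subset_topologicalClosure indG.dense ?_
    rintro _ ⟨x, h, rfl⟩
    refine (indG.ιL₁ hC h).apply_mem_topologicalClosure_span hτ_dense ?_ x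
    rintro _ ⟨ξ, η, rfl⟩
    exact ⟨(ξ, η, h), rfl⟩
  have hg : Dense (span ℂ (range g) : Set K2) := by
    refine dense_span_of_subset_topologicalClosure ind2.dense ?_
    rintro _ ⟨ξ, k, rfl⟩
    refine (ind2.ιL₂ ξ).apply_mem_topologicalClosure_span indF.dense ?_ k
    rintro _ ⟨η, h, rfl⟩
    exact ⟨(ξ, η, h), rfl⟩
  obtain ⟨U, hU⟩ := exists_linearIsometryEquiv_apply_eq_of_inner_eq f g hfg hf hg
  refine unitarilyEquiv_of_apply_eq_on_dense_span U hf ?_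
  rintro a _ ⟨⟨ξ, η, h⟩, rfl⟩
  change U (ψG.toFun a (f (ξ, η, h))) = ψ2.toFun a (U (f (ξ, η, h)))
  rw [hψG, hactG]
  change U (f (act1.Φ a ξ, η, h)) = _
  rw [hU, hU]
  exact (hψ2 a ξ _).symm

/-- **Induction in stages.** With `A` acting on the Hilbert `B`-module
`E`, `B` acting on the Hilbert `C`-module `F`, and `G = E ⊗_{Φ₂} F` the inner tensor
product with `A` acting via `(Φ₂)_* ∘ Φ₁`, for every non-degenerate representation
`(φ, H)` of `C` the representation of `A` induced via `G` is unitarily equivalent to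
the one obtained by inducing first via `F` and then via `E`. -/
theorem statement11 (A : Type u) [Ring A] [StarRing A] [Algebra ℂ A] [UniformSpace A] [IsUniformAddGroup A]
    [IsTopologicalRing A] [ContinuousStar A] [ContinuousSMul ℂ A] [CompleteSpace A] [T2Space A] (hA : IsLocallyCStarAlgebra A)
    (B : Type u) [Ring B] [StarRing B] [Algebra ℂ B] [UniformSpace B] [IsUniformAddGroup B]
    [IsTopologicalRing B] [ContinuousStar B] [ContinuousSMul ℂ B] [CompleteSpace B] [T2Space B] (hB : IsLocallyCStarAlgebra B)
    (C : Type u) [Ring C] [StarRing C] [Algebra ℂ C] [UniformSpace C] [IsUniformAddGroup C]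
    [IsTopologicalRing C] [ContinuousStar C] [ContinuousSMul ℂ C] [CompleteSpace C] [T2Space C] (hC : IsLocallyCStarAlgebra C)
    (E : Type u) [AddCommGroup E] [Module ℂ E] [UniformSpace E] [IsUniformAddGroup E]
    [ContinuousSMul ℂ E]
    (F : Type u) [AddCommGroup F] [Module ℂ F] [UniformSpace F] [IsUniformAddGroup F]
    [ContinuousSMul ℂ F]
    (M : HilbertModule B E) (N : HilbertModule C F)
    (act1 : ModuleAction A M) (act2 : ModuleAction B N)
    -- the inner tensor product G = E ⊗_{Φ₂} F
    (G : Type u) [AddCommGroup G] [Module ℂ G] [UniformSpace G] [IsUniformAddGroup G]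
    [ContinuousSMul ℂ G]
    (P : HilbertModule C G) (τ : E → F → G)
    (hτ_inner : ∀ ξ₁ η₁ ξ₂ η₂,
      P.inner (τ ξ₁ η₁) (τ ξ₂ η₂) = N.inner η₁ (act2.Φ (M.inner ξ₁ ξ₂) η₂))
    (hτ_dense : Dense (↑(Submodule.span ℂ {x : G | ∃ ξ η, x = τ ξ η}) : Set G))
    -- A acts on G via (Φ₂)_* ∘ Φ₁
    (actG : ModuleAction A P)
    (hactG : ∀ a ξ η, actG.Φ a (τ ξ η) = τ (act1.Φ a ξ) η)
    -- a non-degenerate representation of C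
    (H : Type u) [NormedAddCommGroup H] [InnerProductSpace ℂ H] [CompleteSpace H]
    (φ : RepOn C H) (hφ : φ.Nondegenerate)
    -- induction via G
    (KG : Type u) [NormedAddCommGroup KG] [InnerProductSpace ℂ KG] [CompleteSpace KG]
    (indG : InducedSpace P.inner φ.toFun KG)
    (ψG : RepOn A KG) (hψG : IsInducedRep actG.Φ indG ψG)
    -- induction via F, giving a representation of B
    (KF : Type u) [NormedAddCommGroup KF] [InnerProductSpace ℂ KF] [CompleteSpace KF]
    (indF : InducedSpace N.inner φ.toFun KF)
    (ψF : RepOn B KF) (hψF : IsInducedRep act2.Φ indF ψF) (hψFnd : ψF.Nondegenerate)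
    -- then induction via E from (ψF, KF)
    (K2 : Type u) [NormedAddCommGroup K2] [InnerProductSpace ℂ K2] [CompleteSpace K2]
    (ind2 : InducedSpace M.inner ψF.toFun K2)
    (ψ2 : RepOn A K2) (hψ2 : IsInducedRep act1.Φ ind2 ψ2) :
    UnitarilyEquiv ψG ψ2 :=
  statement11_general A B C hC E F M N act1 act2 G P τ hτ_inner hτ_dense actG hactG H φ KG indG ψG
    hψG KF indF ψF hψF K2 ind2 ψ2 hψ2
end
end

section
/- Let A be a locally C*-algebra and E a Hilbert A-module. Then the locally C*-algebra L_A(E) of adjointable operators on E, with the topology determined by the seminorms p̃(T) = sup{‖Tξ‖_p : ‖ξ‖_p ≤ 1} for p ∈ S(A), is isomorphic as a topological *-algebra to the inverse limit lim← L_{A_p}(E_p), where the canonical maps (π_p)_* : L_A(E) → L_{A_p}(E_p) satisfy (π_p)_*(T)(σ_p(ξ)) = σ_p(Tξ). -/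
noncomputable section

open Filter Topology Set
open scoped InnerProductSpace

universe u v w

/-! `E` is the inverse limit of the `E_p`: the seminorms `‖σ_p ξ‖ = √(p ⟨ξ, ξ⟩)` define its
complete topology, so compatible families of vectors lift to `E`. An adjointable `T` kills
`ker σ_p`, since `⟨Tξ, Tξ⟩ = ⟨S(Tξ), ξ⟩`, hence descends to `E_p`; there it is the adjoint of the
descent of `S`, so it is bounded by the closed graph theorem, and its norm is `p̃(T)` because
`‖σ_p ξ‖² = p ⟨ξ, ξ⟩`. Conversely the adjoints of a compatible family `(x_p)` are compatible as
well, both families lift pointwise to maps `T`, `S` on `E`, and `⟨Tξ, η⟩ = ⟨ξ, Sη⟩` because the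
continuous C*-seminorms separate the points of `A`. -/

theorem LinearMap.exists_comp_eq_of_ker_le {R M N P : Type*} [Ring R] [AddCommGroup M]
    [AddCommGroup N] [AddCommGroup P] [Module R M] [Module R N] [Module R P]
    {f : M →ₗ[R] N} (hf : Function.Surjective f) {g : M →ₗ[R] P} (h : ker f ≤ ker g) :
    ∃ g' : N →ₗ[R] P, g' ∘ₗ f = g :=
  ⟨(ker f).liftQ g h ∘ₗ (f.quotKerEquivOfSurjective hf).symm, by
    ext x
    simp⟩

namespace HilbertCStarModule

variable {B : Type u} [NormedRing B] [StarRing B] [CStarRing B]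
    [NormedAlgebra ℂ B] [StarModule ℂ B] [CompleteSpace B]
    {F : Type v} [NormedAddCommGroup F] [NormedSpace ℂ F]
    (N : HilbertCStarModule B F)

lemma inner_zero_right (ξ : F) : N.inner ξ 0 = 0 := by
  simpa using N.inner_add_right ξ 0 0

lemma inner_sub_right (ξ η ζ : F) : N.inner ξ (η - ζ) = N.inner ξ η - N.inner ξ ζ :=
  eq_sub_of_add_eq (by rw [← N.inner_add_right, sub_add_cancel])

lemma ext_inner_right {ξ η : F} (h : ∀ ζ, N.inner ζ ξ = N.inner ζ η) : ξ = η :=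
  sub_eq_zero.1 <| N.inner_self_eq_zero _ <| by rw [N.inner_sub_right, h, sub_self]

open scoped ComplexOrder in
/-- Mathlib's `CStarModule`s are left modules: `F` is one over `Bᵐᵒᵖ`. -/
lemma norm_inner_le (ξ η : F) : ‖N.inner ξ η‖ ≤ ‖ξ‖ * ‖η‖ := by
  let _ : CStarAlgebra B := { ‹CStarRing B›, ‹NormedAlgebra ℂ B›, ‹StarModule ℂ B› with }
  let _ : PartialOrder B := CStarAlgebra.spectralOrder B
  have : StarOrderedRing B := CStarAlgebra.spectralOrderedRing B
  let _ : SMul Bᵐᵒᵖ F := ⟨fun a ξ => N.smul ξ a.unop⟩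
  let _ : CStarModule Bᵐᵒᵖ F :=
    { inner := fun ξ η => MulOpposite.op (N.inner ξ η)
      inner_add_right := by intros; simp [N.inner_add_right]
      inner_self_nonneg := by
        intro ξ
        obtain ⟨a, ha⟩ := N.inner_self_pos ξ
        show 0 ≤ N.inner ξ ξ
        rw [ha]
        exact star_mul_self_nonneg a
      inner_self := by
        intro ξ
        refine ⟨fun h => N.inner_self_eq_zero ξ (MulOpposite.op_injective h), ?_⟩
        rintro rfl
        simp [N.inner_zero_right]
      inner_op_smul_right := fun {a ξ η} =>
        congrArg MulOpposite.op (N.inner_smul_right ξ η a.unop)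
      inner_smul_right_complex := by intros; simp [N.inner_smulC]
      star_inner ξ η := congrArg MulOpposite.op (N.star_inner ξ η)
      norm_eq_sqrt_norm_inner_self := N.norm_eq }
  exact CStarModule.norm_inner_le (A := Bᵐᵒᵖ) F

lemma continuous_inner_right (ξ : F) : Continuous (N.inner ξ) :=
  AddMonoidHomClass.continuous_of_bound (AddMonoidHom.mk' (N.inner ξ) (N.inner_add_right ξ))
    ‖ξ‖ (N.norm_inner_le ξ)

/-- Closed graph: the graph of `T` is cut out by the equations `⟨Sχ, ξ⟩ = ⟨χ, η⟩`. -/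
lemma continuous_of_adjointable [CompleteSpace F] {S : F → F} (T : F →ₗ[ℂ] F)
    (h : Adjointable N.inner S T) : Continuous T := by
  refine T.continuous_of_isClosed_graph ?_
  have hgraph : (T.graph : Set (F × F)) =
      ⋂ χ, {z | N.inner (S χ) z.1 = N.inner χ z.2} := by
    ext z
    simp only [Set.mem_iInter, Set.mem_ofPred_eq, SetLike.mem_coe, LinearMap.mem_graph_iff]
    exact ⟨fun hz χ => hz ▸ h χ z.1,
      fun hz => N.ext_inner_right fun χ => (hz χ).symm.trans (h χ z.1)⟩
  rw [hgraph]
  exact isClosed_iInter fun χ => isClosed_eq ((N.continuous_inner_right _).comp continuous_fst)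
    ((N.continuous_inner_right χ).comp continuous_snd)

end HilbertCStarModule

namespace HilbertModule

variable {A : Type u} [Ring A] [StarRing A] [Algebra ℂ A] [UniformSpace A]
    {E : Type v} [AddCommGroup E] [Module ℂ E] [UniformSpace E]
    (M : HilbertModule A E)

lemma inner_sub_right (ξ η ζ : E) : M.inner ξ (η - ζ) = M.inner ξ η - M.inner ξ ζ :=
  eq_sub_of_add_eq (by rw [← M.inner_add_right, sub_add_cancel])

lemma ext_inner_right {ξ η : E} (h : ∀ ζ, M.inner ζ ξ = M.inner ζ η) : ξ = η :=
  sub_eq_zero.1 <| M.inner_self_eq_zero _ <| by rw [M.inner_sub_right, h, sub_self]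

variable {M}

lemma adjointable_symm {T S : E → E} (h : Adjointable M.inner T S) : Adjointable M.inner S T :=
  fun ξ η => by rw [← M.star_inner η (S ξ), ← h, M.star_inner]

lemma exists_linearMap_of_adjointable {T S : E → E} (h : Adjointable M.inner T S) :
    ∃ TL : E →ₗ[ℂ] E, ⇑TL = T := by
  have h' := adjointable_symm h
  refine ⟨{ toFun := T, map_add' := ?_, map_smul' := ?_ }, rfl⟩
  · exact fun ξ η => M.ext_inner_right fun ζ => by
      rw [← h', M.inner_add_right, M.inner_add_right, h', h']
  · exact fun c ξ => M.ext_inner_right fun ζ => by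
      rw [← h', M.inner_smulC, M.inner_smulC, h', RingHom.id_apply]

lemma tendsto_nhds_zero_iff {ι : Type*} {l : Filter ι} {f : ι → E} :
    Tendsto f l (𝓝 0) ↔
      ∀ p : CStarSeminorm A, Tendsto (fun i => Real.sqrt (p (M.inner (f i) (f i)))) l (𝓝 0) := by
  simpa [tendsto_map'_iff, Function.comp_def] using M.topology_eq (map f l)

end HilbertModule

namespace CStarSeminorm

variable {A : Type u} [Ring A] [StarRing A] [Algebra ℂ A] [TopologicalSpace A]

protected lemma nonneg (p : CStarSeminorm A) (a : A) : 0 ≤ p a := p.nonneg' a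

instance : Zero (CStarSeminorm A) :=
  ⟨{ toFun := 0
     nonneg' := fun _ => le_rfl
     add_le' := by simp
     smul' := by simp
     mul_le' := by simp
     star_mul_self' := by simp
     continuous' := continuous_const }⟩

instance : Max (CStarSeminorm A) :=
  ⟨fun p q =>
    { toFun := fun a => max (p.toFun a) (q.toFun a)
      nonneg' := fun a => le_max_of_le_left (p.nonneg' a)
      add_le' := fun a b => max_le
        ((p.add_le' a b).trans (add_le_add (le_max_left _ _) (le_max_left _ _)))
        ((q.add_le' a b).trans (add_le_add (le_max_right _ _) (le_max_right _ _)))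
      smul' := fun c a => by
        rw [p.smul', q.smul', mul_max_of_nonneg _ _ (norm_nonneg c)]
      mul_le' := fun a b => max_le
        ((p.mul_le' a b).trans (mul_le_mul (le_max_left _ _) (le_max_left _ _)
          (p.nonneg' b) (le_max_of_le_left (p.nonneg' a))))
        ((q.mul_le' a b).trans (mul_le_mul (le_max_right _ _) (le_max_right _ _)
          (q.nonneg' b) (le_max_of_le_left (p.nonneg' a))))
      star_mul_self' := fun a => by
        rw [p.star_mul_self', q.star_mul_self']
        exact ((pow_left_monotoneOn (n := 2)).map_max (p.nonneg' a) (q.nonneg' a)).symm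
      continuous' := p.continuous'.max q.continuous' }⟩

instance : LE (CStarSeminorm A) := ⟨fun p q => ∀ a, p a ≤ q a⟩

instance : LT (CStarSeminorm A) := ⟨fun p q => p ≤ q ∧ ¬q ≤ p⟩

instance inst_s19 : SemilatticeSup (CStarSeminorm A) :=
  DFunLike.coe_injective.semilatticeSup _ Iff.rfl Iff.rfl fun _ _ => rfl

end CStarSeminorm

namespace CStarQuotient

variable {A : Type u} [Ring A] [StarRing A] [Algebra ℂ A] [TopologicalSpace A]
    {p q : CStarSeminorm A}
    {Ap : Type v} [NormedRing Ap] [StarRing Ap] [CStarRing Ap] [NormedAlgebra ℂ Ap]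
    [StarModule ℂ Ap] [CompleteSpace Ap]
    {Aq : Type w} [NormedRing Aq] [StarRing Aq] [CStarRing Aq] [NormedAlgebra ℂ Aq]
    [StarModule ℂ Aq] [CompleteSpace Aq]

lemma π_eq_iff (Q : CStarQuotient A p Ap) {a b : A} : Q.π a = Q.π b ↔ p (a - b) = 0 := by
  rw [← sub_eq_zero, ← map_sub, ← norm_eq_zero, Q.norm_eq]

lemma π_eq_of_le (Qp : CStarQuotient A p Ap) (Qq : CStarQuotient A q Aq) (hqp : q ≤ p)
    {a b : A} (h : Qp.π a = Qp.π b) : Qq.π a = Qq.π b :=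
  Qq.π_eq_iff.2 <| le_antisymm ((hqp _).trans_eq (Qp.π_eq_iff.1 h)) (q.nonneg _)

end CStarQuotient

lemma IsLocallyCStarAlgebra.eq_zero_of_forall_seminorm_eq_zero {A : Type*} [Ring A] [StarRing A]
    [Algebra ℂ A] [TopologicalSpace A] [T2Space A] (hA : IsLocallyCStarAlgebra A) {a : A}
    (h : ∀ p : CStarSeminorm A, p a = 0) : a = 0 :=
  Specializes.eq <| specializes_iff_pure.2 <| (hA (pure a)).2 fun p => by
    simpa [h p] using tendsto_pure_nhds (⇑p) a

lemma IsLocallyCStarAlgebra.eq_of_forall_π_eq {A : Type u} [Ring A] [StarRing A]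
    [Algebra ℂ A] [TopologicalSpace A] [T2Space A] (hA : IsLocallyCStarAlgebra A)
    {Ap : CStarSeminorm A → Type v} [∀ p, NormedRing (Ap p)] [∀ p, StarRing (Ap p)]
    [∀ p, CStarRing (Ap p)] [∀ p, NormedAlgebra ℂ (Ap p)] [∀ p, StarModule ℂ (Ap p)]
    [∀ p, CompleteSpace (Ap p)] (Q : ∀ p, CStarQuotient A p (Ap p)) {a b : A}
    (h : ∀ p, (Q p).π a = (Q p).π b) : a = b :=
  sub_eq_zero.1 <| hA.eq_zero_of_forall_seminorm_eq_zero fun p => (Q p).π_eq_iff.1 (h p)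

namespace ModuleQuotient

variable {A : Type u} [Ring A] [StarRing A] [Algebra ℂ A] [UniformSpace A]
    {E : Type v} [AddCommGroup E] [Module ℂ E] [UniformSpace E]
    {M : HilbertModule A E} {p : CStarSeminorm A}
    {Ap : Type w} [NormedRing Ap] [StarRing Ap] [CStarRing Ap] [NormedAlgebra ℂ Ap]
    [StarModule ℂ Ap] [CompleteSpace Ap] {Q : CStarQuotient A p Ap}
    {Ep : Type*} [NormedAddCommGroup Ep] [NormedSpace ℂ Ep] {Mp : HilbertCStarModule Ap Ep}
    (R : ModuleQuotient M p Q Mp)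

lemma norm_σ (ξ : E) : ‖R.σ ξ‖ = Real.sqrt (p (M.inner ξ ξ)) := by
  rw [Mp.norm_eq, R.inner_eq, Q.norm_eq]

lemma norm_σ_sq (ξ : E) : ‖R.σ ξ‖ ^ 2 = p (M.inner ξ ξ) := by
  rw [R.norm_σ, Real.sq_sqrt (p.nonneg _)]

lemma σ_apply_eq_zero_of_adjointable {T S : E → E} (h : Adjointable M.inner T S) {ξ : E}
    (hξ : R.σ ξ = 0) : R.σ (T ξ) = 0 :=
  Mp.inner_self_eq_zero _ <| by
    rw [R.inner_eq, ← HilbertModule.adjointable_symm h, ← R.inner_eq, hξ, Mp.inner_zero_right]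

lemma exists_linearMap_of_adjointable {T S : E → E} (h : Adjointable M.inner T S) :
    ∃ Tp : Ep →ₗ[ℂ] Ep, ∀ ξ, Tp (R.σ ξ) = R.σ (T ξ) := by
  obtain ⟨TL, rfl⟩ := HilbertModule.exists_linearMap_of_adjointable h
  obtain ⟨Tp, hTp⟩ := LinearMap.exists_comp_eq_of_ker_le (g := R.σ ∘ₗ TL) R.surj
    fun ξ hξ => R.σ_apply_eq_zero_of_adjointable h hξ
  exact ⟨Tp, LinearMap.congr_fun hTp⟩

lemma exists_continuousLinearMap_of_adjointable {T S : E → E} (h : Adjointable M.inner T S) :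
    ∃ Tp : Ep →L[ℂ] Ep, ∀ ξ, Tp (R.σ ξ) = R.σ (T ξ) := by
  have := Mp.complete
  obtain ⟨Tp, hTp⟩ := R.exists_linearMap_of_adjointable h
  obtain ⟨Sp, hSp⟩ := R.exists_linearMap_of_adjointable (HilbertModule.adjointable_symm h)
  have hSpTp : Adjointable Mp.inner Sp Tp := by
    intro u v
    obtain ⟨ξ, rfl⟩ := R.surj u
    obtain ⟨η, rfl⟩ := R.surj v
    rw [hSp, hTp, R.inner_eq, R.inner_eq, HilbertModule.adjointable_symm h]
  exact ⟨⟨Tp, Mp.continuous_of_adjointable Tp hSpTp⟩, hTp⟩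

lemma tendsto_σ_nhds_zero : Tendsto R.σ (𝓝 0) (𝓝 0) := by
  rw [tendsto_zero_iff_norm_tendsto_zero]
  simpa only [R.norm_σ, id] using M.tendsto_nhds_zero_iff.1 tendsto_id p

lemma continuous_σ [IsTopologicalAddGroup E] : Continuous R.σ :=
  continuous_of_tendsto_nhds_zero R.σ R.tendsto_σ_nhds_zero

lemma opSeminormLE_iff_opNorm_le {T : E → E} {Tp : Ep →L[ℂ] Ep}
    (hTp : ∀ ξ, Tp (R.σ ξ) = R.σ (T ξ)) {C : ℝ} (hC : 0 ≤ C) :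
    OpSeminormLE M.inner (fun a => p a) T C ↔ ‖Tp‖ ≤ C := by
  rw [Tp.opNorm_le_iff hC, R.surj.forall]
  refine forall_congr' fun ξ => ?_
  dsimp only
  rw [hTp, ← R.norm_σ_sq, ← R.norm_σ_sq, ← mul_pow,
    pow_le_pow_iff_left₀ (norm_nonneg _) (by positivity) two_ne_zero]

end ModuleQuotient

section InverseLimit

variable {A : Type u} [Ring A] [StarRing A] [Algebra ℂ A] [UniformSpace A]
    {E : Type v} [AddCommGroup E] [Module ℂ E] [UniformSpace E] {M : HilbertModule A E}
    {Ap : CStarSeminorm A → Type w} [∀ p, NormedRing (Ap p)] [∀ p, StarRing (Ap p)]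
    [∀ p, CStarRing (Ap p)] [∀ p, NormedAlgebra ℂ (Ap p)] [∀ p, StarModule ℂ (Ap p)]
    [∀ p, CompleteSpace (Ap p)] {Q : ∀ p, CStarQuotient A p (Ap p)}
    {Ep : CStarSeminorm A → Type*} [∀ p, NormedAddCommGroup (Ep p)] [∀ p, NormedSpace ℂ (Ep p)]
    {Mp : ∀ p, HilbertCStarModule (Ap p) (Ep p)} (R : ∀ p, ModuleQuotient M p (Q p) (Mp p))

lemma eq_of_forall_σ_eq [T2Space A] (hA : IsLocallyCStarAlgebra A) {ξ η : E}
    (h : ∀ p, (R p).σ ξ = (R p).σ η) : ξ = η := by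
  refine sub_eq_zero.1 <| M.inner_self_eq_zero _ <| hA.eq_of_forall_π_eq Q fun p => ?_
  rw [← (R p).inner_eq, map_sub, h, sub_self, (Mp p).inner_zero_right, map_zero]

variable {σpq : ∀ p q : CStarSeminorm A, q ≤ p → (Ep p →L[ℂ] Ep q)}

/-- Lifts `f p` of the `v p` form a Cauchy net, as `σ_r (f p - f q) = 0` for `p, q ≥ r`. -/
lemma exists_σ_eq_of_compatible [IsUniformAddGroup E]
    (hσpq : ∀ p q h ξ, σpq p q h ((R p).σ ξ) = (R q).σ ξ) (v : ∀ p, Ep p)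
    (hv : ∀ p q h, σpq p q h (v p) = v q) : ∃ ξ : E, ∀ p, (R p).σ ξ = v p := by
  have := M.complete
  choose f hf using fun p => (R p).surj (v p)
  have hfv : ∀ r p, r ≤ p → (R r).σ (f p) = v r := fun r p h => by
    rw [← hσpq p r h, hf, hv]
  have hf_cauchy : CauchySeq f := by
    refine (IsUniformAddGroup.cauchy_map_iff_tendsto _ f).2 ⟨atTop_neBot, ?_⟩
    refine M.tendsto_nhds_zero_iff.2 fun r => tendsto_const_nhds.congr' ?_
    filter_upwards [(eventually_ge_atTop r).prod_mk (eventually_ge_atTop r)] with pq hpq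
    rw [← (R r).norm_σ, map_sub, hfv r _ hpq.1, hfv r _ hpq.2, sub_self, norm_zero]
  obtain ⟨ξ, hξ⟩ := cauchySeq_tendsto_of_complete hf_cauchy
  refine ⟨ξ, fun p => tendsto_nhds_unique (((R p).continuous_σ.tendsto ξ).comp hξ) ?_⟩
  refine tendsto_const_nhds.congr' ?_
  filter_upwards [eventually_ge_atTop p] with q hq
  exact (hfv p q hq).symm

lemma adjoint_family_compatible (hσpq : ∀ p q h ξ, σpq p q h ((R p).σ ξ) = (R q).σ ξ)
    {x y : ∀ p, Ep p →L[ℂ] Ep p}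
    (hy : ∀ p, Adjointable (Mp p).inner (x p) (y p))
    (hx : ∀ p q h, (x q).comp (σpq p q h) = (σpq p q h).comp (x p))
    {p q : CStarSeminorm A} (h : q ≤ p) (η : E) :
    σpq p q h (y p ((R p).σ η)) = y q ((R q).σ η) := by
  obtain ⟨η', hη'⟩ := (R p).surj (y p ((R p).σ η))
  rw [← hη', hσpq]
  refine (Mp q).ext_inner_right fun w => ?_
  obtain ⟨ζ, rfl⟩ := (R q).surj w
  obtain ⟨ζ', hζ'⟩ := (R p).surj (x p ((R p).σ ζ))
  have hxζ : x q ((R q).σ ζ) = (R q).σ ζ' := by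
    rw [← hσpq p q h ζ, ← ContinuousLinearMap.comp_apply, hx, ContinuousLinearMap.comp_apply,
      ← hζ', hσpq]
  rw [← hy q, hxζ, (R q).inner_eq, (R q).inner_eq]
  refine (Q p).π_eq_of_le (Q q) h ?_
  rw [← (R p).inner_eq, ← (R p).inner_eq, hη', hζ', hy p]

end InverseLimit

theorem statement19_general (A : Type u) [Ring A] [StarRing A] [Algebra ℂ A] [UniformSpace A]
    [T2Space A] (hA : IsLocallyCStarAlgebra A)
    (E : Type u) [AddCommGroup E] [Module ℂ E] [UniformSpace E] [IsUniformAddGroup E]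
    (M : HilbertModule A E)
    (Ap : CStarSeminorm A → Type u)
    [∀ p, NormedRing (Ap p)] [∀ p, StarRing (Ap p)] [∀ p, CStarRing (Ap p)]
    [∀ p, NormedAlgebra ℂ (Ap p)] [∀ p, StarModule ℂ (Ap p)] [∀ p, CompleteSpace (Ap p)]
    (Q : ∀ p, CStarQuotient A p (Ap p))
    (Ep : CStarSeminorm A → Type u)
    [∀ p, NormedAddCommGroup (Ep p)] [∀ p, NormedSpace ℂ (Ep p)]
    (Mp : ∀ p, HilbertCStarModule (Ap p) (Ep p))
    (R : ∀ p, ModuleQuotient M p (Q p) (Mp p))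
    (σpq : ∀ p q : CStarSeminorm A, (∀ a, q a ≤ p a) → (Ep p →L[ℂ] Ep q))
    (hσpq : ∀ (p q : CStarSeminorm A) (h : ∀ a, q a ≤ p a) (ξ : E),
      σpq p q h ((R p).σ ξ) = (R q).σ ξ) :
    -- (1) each adjointable operator T induces a unique (π_p)_*(T) on each E_p
    (∀ T S : E → E, Adjointable M.inner T S → ∀ p,
      ∃! Tp : Ep p →L[ℂ] Ep p, ∀ ξ, Tp ((R p).σ ξ) = (R p).σ (T ξ)) ∧
    -- (2) the canonical map L_A(E) → lim← L_{A_p}(E_p) is injective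
    (∀ T S T' S' : E → E, Adjointable M.inner T S → Adjointable M.inner T' S' →
      (∀ p ξ, (R p).σ (T ξ) = (R p).σ (T' ξ)) → T = T') ∧
    -- (3) its image is exactly the set of compatible families of adjointable operators
    (∀ x : ∀ p, Ep p →L[ℂ] Ep p,
      (∀ p, ∃ y : Ep p →L[ℂ] Ep p,
        Adjointable (Mp p).inner (fun ζ => x p ζ) (fun ζ => y ζ)) →
      (∀ (p q : CStarSeminorm A) (h : ∀ a, q a ≤ p a),
        (x q).comp (σpq p q h) = (σpq p q h).comp (x p)) →
      ∃ T S : E → E, Adjointable M.inner T S ∧ ∀ p ξ, x p ((R p).σ ξ) = (R p).σ (T ξ)) ∧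
    -- (4) it carries the seminorm p̃ to the operator norm, hence is a homeomorphism
    (∀ T S : E → E, Adjointable M.inner T S →
      ∀ (p : CStarSeminorm A) (Tp : Ep p →L[ℂ] Ep p),
        (∀ ξ, Tp ((R p).σ ξ) = (R p).σ (T ξ)) →
        ∀ C : ℝ, 0 ≤ C →
          (OpSeminormLE M.inner (fun x => p x) T C ↔ ‖Tp‖ ≤ C)) := by
  refine ⟨fun T S hTS p => ?_, fun T S T' S' _ _ h => ?_, fun x hxy hx => ?_,
    fun T S _ p Tp hTp C hC => (R p).opSeminormLE_iff_opNorm_le hTp hC⟩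
  · obtain ⟨Tp, hTp⟩ := (R p).exists_continuousLinearMap_of_adjointable hTS
    exact ⟨Tp, hTp, fun Tp' hTp' => ContinuousLinearMap.ext <|
      (R p).surj.forall.2 fun ξ => (hTp' ξ).trans (hTp ξ).symm⟩
  · exact funext fun ξ => eq_of_forall_σ_eq R hA fun p => h p ξ
  · choose y hy using hxy
    have hxσ : ∀ ξ p q h, σpq p q h (x p ((R p).σ ξ)) = x q ((R q).σ ξ) := fun ξ p q h => by
      rw [← hσpq p q h, ← ContinuousLinearMap.comp_apply, ← hx, ContinuousLinearMap.comp_apply]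
    choose T hT using fun ξ =>
      exists_σ_eq_of_compatible R hσpq (fun p => x p ((R p).σ ξ)) (hxσ ξ)
    choose S hS using fun η =>
      exists_σ_eq_of_compatible R hσpq (fun p => y p ((R p).σ η))
        fun p q h => adjoint_family_compatible R hσpq hy hx h η
    refine ⟨T, S, fun ξ η => hA.eq_of_forall_π_eq Q fun p => ?_, fun p ξ => (hT ξ p).symm⟩
    rw [← (R p).inner_eq, ← (R p).inner_eq, hT, hS, hy]

/-- For a Hilbert module `E` over a locally C*-algebra `A`, the
algebra `L_A(E)` of adjointable operators, with the seminorms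
`p̃(T) = sup{‖Tξ‖_p : ‖ξ‖_p ≤ 1}`, is isomorphic as a topological `*`-algebra to the
inverse limit `lim← L_{A_p}(E_p)` via `T ↦ ((π_p)_*(T))_p`, where
`(π_p)_*(T)(σ_p ξ) = σ_p (T ξ)`: the canonical map is well defined, injective, has
exactly the compatible families as image, and identifies the seminorm `p̃` with the
operator norm on `L_{A_p}(E_p)`. -/
theorem statement19 (A : Type u) [Ring A] [StarRing A] [Algebra ℂ A] [UniformSpace A] [IsUniformAddGroup A]
    [IsTopologicalRing A] [ContinuousStar A] [ContinuousSMul ℂ A] [CompleteSpace A] [T2Space A] (hA : IsLocallyCStarAlgebra A)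
    (E : Type u) [AddCommGroup E] [Module ℂ E] [UniformSpace E] [IsUniformAddGroup E]
    [ContinuousSMul ℂ E]
    (M : HilbertModule A E)
    (Ap : CStarSeminorm A → Type u)
    [∀ p, NormedRing (Ap p)] [∀ p, StarRing (Ap p)] [∀ p, CStarRing (Ap p)]
    [∀ p, NormedAlgebra ℂ (Ap p)] [∀ p, StarModule ℂ (Ap p)] [∀ p, CompleteSpace (Ap p)]
    (Q : ∀ p, CStarQuotient A p (Ap p))
    (Ep : CStarSeminorm A → Type u)
    [∀ p, NormedAddCommGroup (Ep p)] [∀ p, NormedSpace ℂ (Ep p)]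
    (Mp : ∀ p, HilbertCStarModule (Ap p) (Ep p))
    (R : ∀ p, ModuleQuotient M p (Q p) (Mp p))
    (σpq : ∀ p q : CStarSeminorm A, (∀ a, q a ≤ p a) → (Ep p →L[ℂ] Ep q))
    (hσpq : ∀ (p q : CStarSeminorm A) (h : ∀ a, q a ≤ p a) (ξ : E),
      σpq p q h ((R p).σ ξ) = (R q).σ ξ) :
    -- (1) each adjointable operator T induces a unique (π_p)_*(T) on each E_p
    (∀ T S : E → E, Adjointable M.inner T S → ∀ p,
      ∃! Tp : Ep p →L[ℂ] Ep p, ∀ ξ, Tp ((R p).σ ξ) = (R p).σ (T ξ)) ∧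
    -- (2) the canonical map L_A(E) → lim← L_{A_p}(E_p) is injective
    (∀ T S T' S' : E → E, Adjointable M.inner T S → Adjointable M.inner T' S' →
      (∀ p ξ, (R p).σ (T ξ) = (R p).σ (T' ξ)) → T = T') ∧
    -- (3) its image is exactly the set of compatible families of adjointable operators
    (∀ x : ∀ p, Ep p →L[ℂ] Ep p,
      (∀ p, ∃ y : Ep p →L[ℂ] Ep p,
        Adjointable (Mp p).inner (fun ζ => x p ζ) (fun ζ => y ζ)) →
      (∀ (p q : CStarSeminorm A) (h : ∀ a, q a ≤ p a),
        (x q).comp (σpq p q h) = (σpq p q h).comp (x p)) →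
      ∃ T S : E → E, Adjointable M.inner T S ∧ ∀ p ξ, x p ((R p).σ ξ) = (R p).σ (T ξ)) ∧
    -- (4) it carries the seminorm p̃ to the operator norm, hence is a homeomorphism
    (∀ T S : E → E, Adjointable M.inner T S →
      ∀ (p : CStarSeminorm A) (Tp : Ep p →L[ℂ] Ep p),
        (∀ ξ, Tp ((R p).σ ξ) = (R p).σ (T ξ)) →
        ∀ C : ℝ, 0 ≤ C →
          (OpSeminormLE M.inner (fun x => p x) T C ↔ ‖Tp‖ ≤ C)) :=
  statement19_general A hA E M Ap Q Ep Mp R σpq hσpq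
end
end
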